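/- arXiv:2401.00628 — 7 statements merged into one kernel-verified Lean document; each statement's English description precedes it below -/
import Mathlib

section
/- Let d ≥ 1. For every permutation π ∈ S_d there exists exactly one strictly monotone factorization of π into transpositions, i.e., exactly one sequence of transpositions ((i_1 j_1), …, (i_r j_r)) with i_k < j_k for all k and j_1 < j_2 < ⋯ < j_r whose product (i_1 j_1)⋯(i_r j_r) equals π; moreover, its length r equals |π| = d − ℓ(π), the minimal length of any transposition factorization of π. Equivalently, between every pair of vertices of the Hurwitz–Cayley graph there is a unique strictly monotone walk, and this walk is a geodesic. -/
noncomputable section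

/-- The number of cycles of a permutation of `{1,…,d}`, counting fixed points as 1-cycles. -/
def ell {d : ℕ} (π : Equiv.Perm (Fin d)) : ℕ :=
  π.cycleType.card + (d - π.support.card)

/-- The transposition associated with a pair of points. -/
def toSwap {d : ℕ} (p : Fin d × Fin d) : Equiv.Perm (Fin d) :=
  Equiv.swap p.1 p.2

/-
The last transposition `(i j)` of a strictly monotone factorization of `π` is forced: every
earlier transposition fixes `j` and all larger points, so `j` is the largest point moved by `π`
and `π i = j`. Removing it leaves `π (i j) = (j (π j)) π`, which moves fewer points and has
exactly one more cycle; existence, uniqueness and the length `d - ℓ(π)` all follow by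
induction.
-/

open Equiv Equiv.Perm

namespace Equiv.Perm

variable {α : Type*} [DecidableEq α] {f : Perm α} {x : α}

theorem disjoint_swap_swap_mul_of_apply_apply_eq (hffx : f (f x) = x) :
    Disjoint (swap x (f x)) (swap x (f x) * f) := by
  intro y
  by_cases hyx : y = x
  · right
    simp [hyx]
  by_cases hyfx : y = f x
  · right
    simp [hyfx, hffx]
  · exact Or.inl (swap_apply_of_ne_of_ne hyx hyfx)

variable [Fintype α]

theorem card_support_swap_mul_of_apply_apply_eq (hx : f x ≠ x) (hffx : f (f x) = x) :
    (swap x (f x) * f).support.card + 2 = f.support.card := by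
  conv_rhs => rw [← swap_mul_self_mul x (f x) f]
  rw [(disjoint_swap_swap_mul_of_apply_apply_eq hffx).card_support_mul,
    card_support_swap (Ne.symm hx), add_comm]

theorem card_cycleType_swap_mul_of_apply_apply_eq (hx : f x ≠ x) (hffx : f (f x) = x) :
    (swap x (f x) * f).cycleType.card + 1 = f.cycleType.card := by
  conv_rhs => rw [← swap_mul_self_mul x (f x) f]
  rw [(disjoint_swap_swap_mul_of_apply_apply_eq hffx).cycleType_mul,
    (isCycle_swap (Ne.symm hx)).cycleType, Multiset.card_add, Multiset.card_singleton, add_comm]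

/-- `swap x (f x)` shortens the cycle of `x` by one, and it stays a cycle. -/
theorem card_cycleType_swap_mul_of_apply_apply_ne (hffx : f (f x) ≠ x) :
    (swap x (f x) * f).cycleType.card = f.cycleType.card := by
  have hx : f x ≠ x := fun h => hffx (by rw [h, h])
  set c := f.cycleOf x
  have hc : c.IsCycle := isCycle_cycleOf f hx
  have hcx : c x = f x := cycleOf_apply_self f x
  have hccx : c (c x) ≠ x := by rwa [hcx, cycleOf_apply_apply_self]
  have hdisj : Disjoint (f * c⁻¹) c := disjoint_mul_inv_of_mem_cycleFactorsFinset
    (cycleOf_mem_cycleFactorsFinset_iff.mpr (mem_support.mpr hx))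
  have hdisj' : Disjoint (f * c⁻¹) (swap x (c x) * c) := hdisj.mono le_rfl <| by
    rw [support_swap_mul_eq c x hccx]
    exact Finset.sdiff_subset
  have hf : f = c * (f * c⁻¹) := by rw [← hdisj.commute.eq, inv_mul_cancel_right]
  have hswap : swap x (f x) * f = (f * c⁻¹) * (swap x (c x) * c) := by
    rw [hdisj'.commute.eq, hcx, mul_assoc, ← hf]
  rw [hswap, hdisj'.cycleType_mul, (hc.swap_mul (hcx ▸ hx) hccx).cycleType, hf,
    hdisj.symm.cycleType_mul, hc.cycleType]
  simp

end Equiv.Perm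

theorem ell_one {d : ℕ} : ell (1 : Perm (Fin d)) = d := by
  simp [ell]

theorem ell_swap_mul {d : ℕ} {f : Perm (Fin d)} {x : Fin d} (hx : f x ≠ x) :
    ell (swap x (f x) * f) = ell f + 1 := by
  have hd : f.support.card ≤ d := by simpa using Finset.card_le_univ f.support
  unfold ell
  by_cases hffx : f (f x) = x
  · have := card_support_swap_mul_of_apply_apply_eq hx hffx
    have := card_cycleType_swap_mul_of_apply_apply_eq hx hffx
    omega
  · have hsupp : (swap x (f x) * f).support.card + 1 = f.support.card := by
      rw [support_swap_mul_eq f x hffx]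
      exact Finset.card_sdiff_add_card_eq_card
        (Finset.singleton_subset_iff.mpr (mem_support.mpr hx))
    have := card_cycleType_swap_mul_of_apply_apply_ne hffx
    omega

section Factorization

variable {d : ℕ}

def IsStrictlyMonotone (l : List (Fin d × Fin d)) : Prop :=
  (∀ p ∈ l, p.1 < p.2) ∧ (l.map Prod.snd).Pairwise (· < ·)

theorem isStrictlyMonotone_nil : IsStrictlyMonotone ([] : List (Fin d × Fin d)) := by
  simp [IsStrictlyMonotone]

theorem isStrictlyMonotone_append_singleton_iff {L : List (Fin d × Fin d)} {p : Fin d × Fin d} :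
    IsStrictlyMonotone (L ++ [p]) ↔
      IsStrictlyMonotone L ∧ p.1 < p.2 ∧ ∀ q ∈ L, q.2 < p.2 := by
  simp only [IsStrictlyMonotone, List.mem_append, List.mem_singleton, List.map_append,
    List.pairwise_append, List.map_cons, List.map_nil, List.pairwise_singleton, List.mem_map]
  grind

theorem prod_map_toSwap_append_singleton (L : List (Fin d × Fin d)) (p : Fin d × Fin d) :
    ((L ++ [p]).map toSwap).prod = (L.map toSwap).prod * swap p.1 p.2 := by
  simp [toSwap]

theorem prod_map_toSwap_apply_of_forall_ne {l : List (Fin d × Fin d)} {y : Fin d}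
    (hy : ∀ q ∈ l, q.1 ≠ y ∧ q.2 ≠ y) : (l.map toSwap).prod y = y := by
  induction l with
  | nil => rfl
  | cons q l ih =>
    obtain ⟨hq₁, hq₂⟩ := hy q List.mem_cons_self
    rw [List.map_cons, List.prod_cons, mul_apply, ih fun r hr => hy r (List.mem_cons_of_mem q hr)]
    exact swap_apply_of_ne_of_ne hq₁.symm hq₂.symm

namespace IsStrictlyMonotone

variable {l l' L : List (Fin d × Fin d)} {p : Fin d × Fin d}

theorem prod_apply_fst (hl : IsStrictlyMonotone (L ++ [p])) :
    ((L ++ [p]).map toSwap).prod p.1 = p.2 := by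
  obtain ⟨hL, -, hlt⟩ := isStrictlyMonotone_append_singleton_iff.mp hl
  rw [prod_map_toSwap_append_singleton, mul_apply, swap_apply_left]
  exact prod_map_toSwap_apply_of_forall_ne fun q hq =>
    ⟨((hL.1 q hq).trans (hlt q hq)).ne, (hlt q hq).ne⟩

theorem isGreatest_support (hl : IsStrictlyMonotone (L ++ [p])) :
    IsGreatest (↑((L ++ [p]).map toSwap).prod.support : Set (Fin d)) p.2 := by
  obtain ⟨-, hp, hlt⟩ := isStrictlyMonotone_append_singleton_iff.mp hl
  refine ⟨?_, fun y hy => not_lt.mp fun hpy => mem_support.mp hy ?_⟩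
  · rw [Finset.mem_coe, mem_support]
    exact fun hfix => hp.ne (Equiv.injective _ (hl.prod_apply_fst.trans hfix.symm))
  · refine prod_map_toSwap_apply_of_forall_ne fun q hq => ?_
    have hq₂ : q.2 ≤ p.2 := by
      rcases List.mem_append.mp hq with hq | hq
      · exact (hlt q hq).le
      · rw [List.mem_singleton.mp hq]
    have hq₁ : q.1 < q.2 := hl.1 q hq
    exact ⟨(hq₁.trans_le hq₂ |>.trans hpy).ne, (hq₂.trans_lt hpy).ne⟩

theorem prod_eq_one_iff (hl : IsStrictlyMonotone l) : (l.map toSwap).prod = 1 ↔ l = [] := by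
  refine ⟨fun h => ?_, fun h => by simp [h]⟩
  rcases l.eq_nil_or_concat' with rfl | ⟨L, p, rfl⟩
  · rfl
  · have hmem := hl.isGreatest_support.1
    rw [Finset.mem_coe, h, support_one] at hmem
    exact absurd hmem (Finset.notMem_empty _)

theorem snd_lt_of_forall_mem_support_lt (hl : IsStrictlyMonotone l) {y : Fin d}
    (hy : ∀ z ∈ (l.map toSwap).prod.support, z < y) : ∀ q ∈ l, q.2 < y := by
  rcases l.eq_nil_or_concat' with rfl | ⟨L, p, rfl⟩
  · simp
  have hp := hy p.2 hl.isGreatest_support.1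
  obtain ⟨-, -, hlt⟩ := isStrictlyMonotone_append_singleton_iff.mp hl
  intro q hq
  rcases List.mem_append.mp hq with hq | hq
  · exact (hlt q hq).trans hp
  · rwa [List.mem_singleton.mp hq]

theorem eq_of_prod_eq (hl : IsStrictlyMonotone l) (hl' : IsStrictlyMonotone l')
    (h : (l.map toSwap).prod = (l'.map toSwap).prod) : l = l' := by
  induction l using List.reverseRecOn generalizing l' with
  | nil => exact ((hl'.prod_eq_one_iff).mp (by simpa using h.symm)).symm
  | append_singleton L p ih =>
    obtain ⟨hL, -, -⟩ := isStrictlyMonotone_append_singleton_iff.mp hl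
    rcases l'.eq_nil_or_concat' with rfl | ⟨L', p', rfl⟩
    · simpa using (hl.prod_eq_one_iff).mp (by simpa using h)
    obtain ⟨hL', -, -⟩ := isStrictlyMonotone_append_singleton_iff.mp hl'
    have h₂ : p.2 = p'.2 := hl.isGreatest_support.unique (h ▸ hl'.isGreatest_support)
    have h₁ : p.1 = p'.1 := ((L' ++ [p']).map toSwap).prod.injective <| by
      rw [← h, hl.prod_apply_fst, h₂, h, hl'.prod_apply_fst]
    obtain rfl : p = p' := Prod.ext h₁ h₂
    rw [ih hL hL' (by simpa [prod_map_toSwap_append_singleton] using h)]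

theorem length_add_ell (hl : IsStrictlyMonotone l) : l.length + ell (l.map toSwap).prod = d := by
  induction l using List.reverseRecOn with
  | nil => simp [ell_one]
  | append_singleton L p ih =>
    obtain ⟨hL, hp, -⟩ := isStrictlyMonotone_append_singleton_iff.mp hl
    set P := ((L ++ [p]).map toSwap).prod with hP
    have hP₁ : P p.1 = p.2 := hl.prod_apply_fst
    have hP₂ : P p.2 ≠ p.2 := mem_support.mp hl.isGreatest_support.1
    -- as `P p.1 = p.2`, removing the last transposition splits `p.2` off its cycle
    have hprefix : (L.map toSwap).prod = swap p.2 (P p.2) * P := by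
      rw [← hP₁, ← mul_swap_eq_swap_mul, hP₁, hP, prod_map_toSwap_append_singleton,
        mul_swap_mul_self]
    have := ih hL
    rw [hprefix, ell_swap_mul hP₂] at this
    simp only [List.length_append, List.length_singleton]
    omega

end IsStrictlyMonotone

theorem exists_isStrictlyMonotone_prod_eq (π : Perm (Fin d)) :
    ∃ l, IsStrictlyMonotone l ∧ (l.map toSwap).prod = π := by
  induction hn : π.support.card using Nat.strong_induction_on generalizing π with
  | _ n ih =>
    obtain rfl | hπ := eq_or_ne π 1
    · exact ⟨[], isStrictlyMonotone_nil, rfl⟩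
    have hne : π.support.Nonempty :=
      Finset.nonempty_iff_ne_empty.mpr (support_eq_empty_iff.not.mpr hπ)
    set j := π.support.max' hne
    have hj : π j ≠ j := mem_support.mp (Finset.max'_mem _ hne)
    set i := π⁻¹ j
    have hπi : π i = j := π.apply_symm_apply j
    have hij_ne : i ≠ j := fun h => hj (by simpa [h] using hπi)
    have hij : i < j :=
      lt_of_le_of_ne (Finset.le_max' _ i (mem_support.mpr (by rw [hπi]; exact hij_ne.symm))) hij_ne
    set σ := swap j (π j) * π
    obtain ⟨l, hl, hσ⟩ := ih _ (hn ▸ card_support_swap_mul hj) σ rfl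
    have hσj : ∀ z ∈ σ.support, z < j := fun z hz =>
      have hz' := mem_support_swap_mul_imp_mem_support_ne hz
      lt_of_le_of_ne (Finset.le_max' _ z hz'.1) hz'.2
    refine ⟨l ++ [(i, j)], isStrictlyMonotone_append_singleton_iff.mpr
      ⟨hl, hij, hl.snd_lt_of_forall_mem_support_lt (hσ ▸ hσj)⟩, ?_⟩
    have hσπ : σ = π * swap i j := by rw [mul_swap_eq_swap_mul, hπi]
    rw [prod_map_toSwap_append_singleton, hσ, hσπ]
    exact mul_swap_mul_self i j π

end Factorization

theorem existsUnique_strictlyMonotoneFactorization_general (d : ℕ)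
    (π : Equiv.Perm (Fin d)) :
    (∃! l : List (Fin d × Fin d),
      (∀ p ∈ l, p.1 < p.2) ∧ (l.map Prod.snd).Pairwise (· < ·) ∧ (l.map toSwap).prod = π) ∧
    (∀ l : List (Fin d × Fin d),
      ((∀ p ∈ l, p.1 < p.2) ∧ (l.map Prod.snd).Pairwise (· < ·) ∧ (l.map toSwap).prod = π) →
        l.length = d - ell π) := by
  obtain ⟨l, hl, hπ⟩ := exists_isStrictlyMonotone_prod_eq π
  refine ⟨⟨l, ⟨hl.1, hl.2, hπ⟩, fun l' hl' => ?_⟩, fun l' hl' => ?_⟩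
  · exact IsStrictlyMonotone.eq_of_prod_eq ⟨hl'.1, hl'.2.1⟩ hl (hl'.2.2.trans hπ.symm)
  · have := IsStrictlyMonotone.length_add_ell ⟨hl'.1, hl'.2.1⟩
    rw [hl'.2.2] at this
    omega

/-- Jucys–Murphy correspondence, combinatorial form. Every `π ∈ S_d` admits a
unique strictly monotone factorization into transpositions `(i_1 j_1)⋯(i_r j_r)` with `i_k < j_k`
and `j_1 < j_2 < ⋯ < j_r`; moreover the length of this factorization is the minimal one,
`|π| = d - ℓ(π)`. -/
theorem existsUnique_strictlyMonotoneFactorization (d : ℕ) (hd : 1 ≤ d)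
    (π : Equiv.Perm (Fin d)) :
    (∃! l : List (Fin d × Fin d),
      (∀ p ∈ l, p.1 < p.2) ∧ (l.map Prod.snd).Pairwise (· < ·) ∧ (l.map toSwap).prod = π) ∧
    (∀ l : List (Fin d × Fin d),
      ((∀ p ∈ l, p.1 < p.2) ∧ (l.map Prod.snd).Pairwise (· < ·) ∧ (l.map toSwap).prod = π) →
        l.length = d - ell π) :=
  existsUnique_strictlyMonotoneFactorization_general d π
end
end

section
/- Let d ≥ 1 and for ρ, σ ∈ S_d and r ≥ 0 let W^r_<(ρ,σ) denote the number of strictly monotone r-step walks from ρ to σ in the Hurwitz–Cayley graph. Then W^r_<(ρ,σ) = 1 if r = d − ℓ(ρ⁻¹σ) and W^r_<(ρ,σ) = 0 otherwise; consequently, for every q, the generating function ∑_{r≥0} q^r W^r_<(ρ,σ) equals q^{d − ℓ(ρ⁻¹σ)}. -/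
/-!
The last step `(a, j)` of a strictly monotone walk is read off from its product `f`: all earlier
transpositions move only points below `j`, so `j` is the largest point moved by `f` and
`a = f⁻¹ j`. Peeling off last steps shows that a walk is determined by its product; conversely
every permutation `f ≠ 1` is reached by recursing on `swap j (f j) * f = f * swap (f⁻¹ j) j`,
which fixes `j = max (support f)`. Each step cuts one point out of its cycle, so the length of the walk is
`#support - #cycles = d - ℓ`.
-/

noncomputable section

/-- `Wlt d r ρ σ` is the number of strictly monotone `r`-step walks `ρ → σ` in the
Hurwitz–Cayley graph: sequences of transpositions `((i_1 j_1), …, (i_r j_r))` with `i_k < j_k`,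
`j_1 < ⋯ < j_r` and `ρ·(i_1 j_1)⋯(i_r j_r) = σ`. -/
def Wlt (d r : ℕ) (ρ σ : Equiv.Perm (Fin d)) : ℕ :=
  Nat.card {l : List (Fin d × Fin d) //
    l.length = r ∧ (∀ p ∈ l, p.1 < p.2) ∧ (l.map Prod.snd).Pairwise (· < ·) ∧
      ρ * (l.map toSwap).prod = σ}

open Equiv Equiv.Perm Finset

namespace Equiv.Perm

variable {α : Type*} [Fintype α] [DecidableEq α]

theorem card_cycleType_le_card_support (f : Perm α) : Multiset.card f.cycleType ≤ #f.support := by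
  have h := Multiset.card_nsmul_le_sum fun n (hn : n ∈ f.cycleType) =>
    one_le_two.trans (two_le_of_mem_cycleType hn)
  simpa [sum_cycleType] using h

theorem IsCycle.card_cycleType_swap_mul_add_card_support {c : Perm α} (hc : c.IsCycle) {x : α} (hx : c x ≠ x) :
    Multiset.card (swap x (c x) * c).cycleType + #c.support =
      #(swap x (c x) * c).support + 2 := by
  by_cases hcc : c (c x) = x
  · have hswap : c = swap x (c x) := hc.eq_swap_of_apply_apply_eq_self hx hcc
    rw [hswap, swap_apply_left, swap_mul_self, card_support_swap hx.symm]
    simp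
  · have hx_mem : x ∈ c.support := mem_support.mpr hx
    rw [card_cycleType_eq_one.mpr (hc.swap_mul hx hcc), support_swap_mul_eq c x hcc,
      sdiff_singleton_eq_erase, card_erase_of_mem hx_mem]
    have := card_pos.mpr ⟨x, hx_mem⟩
    omega

theorem card_cycleType_swap_mul_add_card_support {f : Perm α} {x : α} (hx : f x ≠ x) :
    Multiset.card (swap x (f x) * f).cycleType + #f.support =
      #(swap x (f x) * f).support + Multiset.card f.cycleType + 1 := by
  set c := f.cycleOf x
  have hc_mem : c ∈ f.cycleFactorsFinset :=
    cycleOf_mem_cycleFactorsFinset_iff.mpr (mem_support.mpr hx)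
  have hc : c.IsCycle := (mem_cycleFactorsFinset_iff.mp hc_mem).1
  have hcx : c x = f x := cycleOf_apply_self f x
  set g := f * c⁻¹
  have hgc : Disjoint g c := disjoint_mul_inv_of_mem_cycleFactorsFinset hc_mem
  have hf : f = c * g := by rw [← hgc.commute.eq, inv_mul_cancel_right]
  have hh : Disjoint g (swap x (c x) * c) :=
    hgc.mono le_rfl fun _ hy => (mem_support_swap_mul_imp_mem_support_ne hy).1
  have hcycle := hc.card_cycleType_swap_mul_add_card_support (hcx ▸ hx)
  rw [← hcx, hf, ← mul_assoc, hh.symm.cycleType_mul, hh.symm.card_support_mul,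
    hgc.symm.cycleType_mul, hgc.symm.card_support_mul, Multiset.card_add, Multiset.card_add,
    card_cycleType_eq_one.mpr hc]
  omega

end Equiv.Perm

section Walks

variable {α : Type*} [LinearOrder α]

def IsStrictMonoWalk (l : List (α × α)) : Prop :=
  (∀ p ∈ l, p.1 < p.2) ∧ (l.map Prod.snd).Pairwise (· < ·)

def walkProd (l : List (α × α)) : Perm α :=
  (l.map fun p => swap p.1 p.2).prod

@[simp]
theorem walkProd_nil : walkProd ([] : List (α × α)) = 1 := rfl

@[simp]
theorem walkProd_concat (l : List (α × α)) (a j : α) :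
    walkProd (l ++ [(a, j)]) = walkProd l * swap a j := by
  simp [walkProd]

@[simp]
theorem isStrictMonoWalk_nil : IsStrictMonoWalk ([] : List (α × α)) := by
  simp [IsStrictMonoWalk]

theorem isStrictMonoWalk_concat {l : List (α × α)} {a j : α} :
    IsStrictMonoWalk (l ++ [(a, j)]) ↔ IsStrictMonoWalk l ∧ a < j ∧ ∀ p ∈ l, p.2 < j := by
  simp only [IsStrictMonoWalk, List.mem_append, List.mem_cons, List.not_mem_nil, or_false,
    or_imp, forall_and, Prod.forall, forall_eq, List.map_append, List.map_cons, List.map_nil,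
    List.pairwise_append, List.pairwise_cons, IsEmpty.forall_iff, implies_true,
    List.Pairwise.nil, and_self, List.mem_map, Prod.exists, exists_eq_right,
    forall_exists_index, true_and]
  tauto

theorem walkProd_apply_of_forall_ne {l : List (α × α)} {x : α}
    (h : ∀ p ∈ l, p.1 ≠ x ∧ p.2 ≠ x) : walkProd l x = x := by
  induction l with
  | nil => rfl
  | cons p l ih =>
    obtain ⟨h1, h2⟩ := h p List.mem_cons_self
    simp only [walkProd, List.map_cons, List.prod_cons, Perm.mul_apply] at ih ⊢
    rw [ih fun q hq => h q (List.mem_cons_of_mem p hq), swap_apply_of_ne_of_ne h1.symm h2.symm]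

variable [Fintype α]

theorem IsStrictMonoWalk.isGreatest_support_concat {l : List (α × α)} {a j : α}
    (h : IsStrictMonoWalk (l ++ [(a, j)])) :
    IsGreatest (walkProd (l ++ [(a, j)])).support j ∧ walkProd (l ++ [(a, j)]) a = j := by
  obtain ⟨hl, haj, hlj⟩ := isStrictMonoWalk_concat.mp h
  have hfix : ∀ x, j ≤ x → walkProd l x = x := fun x hx =>
    walkProd_apply_of_forall_ne fun p hp =>
      ⟨((hl.1 p hp).trans (hlj p hp)).trans_le hx |>.ne, (hlj p hp).trans_le hx |>.ne⟩
  rw [walkProd_concat]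
  refine ⟨⟨?_, fun x hx => ?_⟩, ?_⟩
  · rw [mem_coe, mem_support, Perm.mul_apply, swap_apply_right, ← hfix j le_rfl, Ne,
      (walkProd l).injective.eq_iff]
    exact haj.ne
  · by_contra! hjx
    rw [mem_coe, mem_support, Perm.mul_apply, swap_apply_of_ne_of_ne (haj.trans hjx).ne' hjx.ne',
      hfix x hjx.le] at hx
    exact hx rfl
  · rw [Perm.mul_apply, swap_apply_left, hfix j le_rfl]

theorem IsStrictMonoWalk.snd_lt_of_forall_mem_support_lt {l : List (α × α)} {b : α}
    (hl : IsStrictMonoWalk l) (hb : ∀ x ∈ (walkProd l).support, x < b) : ∀ p ∈ l, p.2 < b := by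
  rcases l.eq_nil_or_concat' with rfl | ⟨l, ⟨a, j⟩, rfl⟩
  · simp
  have hjb : j < b := hb j (hl.isGreatest_support_concat.1.1)
  obtain ⟨-, -, hlj⟩ := isStrictMonoWalk_concat.mp hl
  intro p hp
  rcases List.mem_append.mp hp with hp | hp
  · exact (hlj p hp).trans hjb
  · rw [List.mem_singleton.mp hp]
    exact hjb

theorem IsStrictMonoWalk.length_add_card_cycleType {l : List (α × α)} (hl : IsStrictMonoWalk l) :
    l.length + Multiset.card (walkProd l).cycleType = #(walkProd l).support := by
  induction l using List.reverseRecOn with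
  | nil => simp
  | append_singleton l p ih =>
    obtain ⟨a, j⟩ := p
    obtain ⟨⟨hj, -⟩, hfa⟩ := hl.isGreatest_support_concat
    have hprev : walkProd l = swap j (walkProd (l ++ [(a, j)]) j) * walkProd (l ++ [(a, j)]) := by
      conv_lhs => rw [← mul_swap_mul_self a j (walkProd l), ← walkProd_concat]
      rw [mul_swap_eq_swap_mul, hfa]
    have hprefix := ih (isStrictMonoWalk_concat.mp hl).1
    rw [hprev] at hprefix
    have hstep := card_cycleType_swap_mul_add_card_support (mem_support.mp hj)
    simp only [List.length_append, List.length_singleton]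
    omega

theorem IsStrictMonoWalk.eq_of_walkProd_eq {l l' : List (α × α)} (hl : IsStrictMonoWalk l)
    (hl' : IsStrictMonoWalk l') (h : walkProd l = walkProd l') : l = l' := by
  induction l using List.reverseRecOn generalizing l' with
  | nil =>
    rcases l'.eq_nil_or_concat' with rfl | ⟨l', ⟨a, j⟩, rfl⟩
    · rfl
    · have := hl'.isGreatest_support_concat.1.1
      simp [← h] at this
  | append_singleton l p ih =>
    obtain ⟨a, j⟩ := p
    rcases l'.eq_nil_or_concat' with rfl | ⟨l', ⟨a', j'⟩, rfl⟩
    · have := hl.isGreatest_support_concat.1.1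
      simp [h] at this
    obtain ⟨hj, ha⟩ := hl.isGreatest_support_concat
    obtain ⟨hj', ha'⟩ := hl'.isGreatest_support_concat
    rw [← h] at hj' ha'
    obtain rfl : j' = j := hj'.unique hj
    obtain rfl : a' = a := (walkProd _).injective (ha'.trans ha.symm)
    rw [walkProd_concat, walkProd_concat] at h
    rw [ih (isStrictMonoWalk_concat.mp hl).1 (isStrictMonoWalk_concat.mp hl').1
      (mul_right_cancel h)]

theorem exists_isStrictMonoWalk_walkProd_eq (π : Perm α) :
    ∃ l, IsStrictMonoWalk l ∧ walkProd l = π := by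
  by_cases hπ : π.support.Nonempty
  · set j := π.support.max' hπ
    have hj : π j ≠ j := mem_support.mp (max'_mem _ _)
    obtain ⟨l, hl, hlπ⟩ := exists_isStrictMonoWalk_walkProd_eq (swap j (π j) * π)
    set a := π⁻¹ j
    have hπa : π a = j := π.apply_symm_apply j
    have haj : a ≠ j := fun h => hj (h ▸ hπa)
    refine ⟨l ++ [(a, j)], isStrictMonoWalk_concat.mpr ⟨hl, ?_, ?_⟩, ?_⟩
    · exact (π.support.le_max' a (mem_support.mpr (hπa ▸ haj.symm))).lt_of_ne haj
    · refine hl.snd_lt_of_forall_mem_support_lt fun x hx => ?_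
      obtain ⟨hxπ, hxj⟩ := mem_support_swap_mul_imp_mem_support_ne (hlπ ▸ hx)
      exact (π.support.le_max' x hxπ).lt_of_ne hxj
    · rw [walkProd_concat, hlπ, ← hπa, ← mul_swap_eq_swap_mul, mul_swap_mul_self]
  · refine ⟨[], isStrictMonoWalk_nil, ?_⟩
    rw [not_nonempty_iff_eq_empty, support_eq_empty_iff] at hπ
    rw [hπ, walkProd_nil]
termination_by #π.support
decreasing_by exact card_support_swap_mul hj

end Walks

theorem sub_ell_eq_card_support_sub_card_cycleType {d : ℕ} (π : Perm (Fin d)) :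
    d - ell π = #π.support - Multiset.card π.cycleType := by
  have hcard := card_cycleType_le_card_support π
  have hd : #π.support ≤ d := by simpa using card_le_univ π.support
  unfold ell
  omega

theorem Wlt_eq_ite_of_forall_iff {d : ℕ} {ρ σ : Perm (Fin d)} {w : List (Fin d × Fin d)}
    (hw : ∀ l, IsStrictMonoWalk l ∧ ρ * walkProd l = σ ↔ l = w) (r : ℕ) :
    Wlt d r ρ σ = if r = w.length then 1 else 0 := by
  have hwalk : ∀ l, (l.length = r ∧ (∀ p ∈ l, p.1 < p.2) ∧ (l.map Prod.snd).Pairwise (· < ·) ∧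
      ρ * (l.map toSwap).prod = σ) ↔ l = w ∧ l.length = r := fun l => by
    rw [← hw l]
    exact ⟨fun ⟨hr, h1, h2, h3⟩ => ⟨⟨⟨h1, h2⟩, h3⟩, hr⟩, fun ⟨⟨⟨h1, h2⟩, h3⟩, hr⟩ => ⟨hr, h1, h2, h3⟩⟩
  unfold Wlt
  split_ifs with hr
  · rw [Nat.card_eq_one_iff_exists]
    exact ⟨⟨w, (hwalk w).mpr ⟨rfl, hr.symm⟩⟩, fun ⟨l, hl⟩ => Subtype.ext ((hwalk l).mp hl).1⟩
  · rw [Nat.card_eq_zero]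
    refine .inl ⟨fun ⟨l, hl⟩ => ?_⟩
    obtain ⟨rfl, rfl⟩ := (hwalk l).mp hl
    exact hr rfl

theorem Wlt_eq_ite_general (d : ℕ) (ρ σ : Equiv.Perm (Fin d)) :
    (∀ r : ℕ, Wlt d r ρ σ = if r = d - ell (ρ⁻¹ * σ) then 1 else 0) ∧
    (∀ q : ℂ, ∑' r : ℕ, q ^ r * (Wlt d r ρ σ : ℂ) = q ^ (d - ell (ρ⁻¹ * σ))) := by
  obtain ⟨w, hw, hwπ⟩ := exists_isStrictMonoWalk_walkProd_eq (ρ⁻¹ * σ)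
  have hwalks : ∀ l, IsStrictMonoWalk l ∧ ρ * walkProd l = σ ↔ l = w := fun l => by
    rw [← eq_inv_mul_iff_mul_eq]
    exact ⟨fun ⟨hl, hlπ⟩ => hl.eq_of_walkProd_eq hw (hlπ.trans hwπ.symm), fun h => h ▸ ⟨hw, hwπ⟩⟩
  have hlen : w.length = d - ell (ρ⁻¹ * σ) := by
    have hcount := hw.length_add_card_cycleType
    rw [sub_ell_eq_card_support_sub_card_cycleType, ← hwπ]
    omega
  have hW : ∀ r, Wlt d r ρ σ = if r = d - ell (ρ⁻¹ * σ) then 1 else 0 :=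
    hlen ▸ Wlt_eq_ite_of_forall_iff hwalks
  refine ⟨hW, fun q => ?_⟩
  rw [tsum_eq_single (d - ell (ρ⁻¹ * σ)) fun r hr => by simp [hW, hr]]
  simp [hW]

/-- The number of strictly monotone `r`-step walks `ρ → σ` in the
Hurwitz–Cayley graph is `1` if `r = d - ℓ(ρ⁻¹σ)` and `0` otherwise; consequently the generating
function `∑_r q^r W^r_<(ρ,σ)` equals `q^(d - ℓ(ρ⁻¹σ))`. -/
theorem Wlt_eq_ite (d : ℕ) (hd : 1 ≤ d) (ρ σ : Equiv.Perm (Fin d)) :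
    (∀ r : ℕ, Wlt d r ρ σ = if r = d - ell (ρ⁻¹ * σ) then 1 else 0) ∧
    (∀ q : ℂ, ∑' r : ℕ, q ^ r * (Wlt d r ρ σ : ℂ) = q ^ (d - ell (ρ⁻¹ * σ))) :=
  Wlt_eq_ite_general d ρ σ
end
end

section
/- Let d ≥ 1 and let ℂ[S_d] be the complex group algebra of the symmetric group S_d, with Jucys–Murphy elements J_1 = 0 and J_j = ∑_{i=1}^{j−1} (i j) for 2 ≤ j ≤ d. Then for every 0 ≤ r ≤ d−1, the sum in ℂ[S_d] of all permutations with exactly d − r cycles (counting fixed points) equals the elementary symmetric polynomial e_r evaluated at J_1, …, J_d; explicitly, ∑_{π : ℓ(π) = d−r} π = ∑_{2 ≤ j_1 < j_2 < ⋯ < j_r ≤ d} J_{j_1} J_{j_2} ⋯ J_{j_r}. -/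
noncomputable section

/-- The Jucys–Murphy elements of `ℂ[S_d]`: `J_j = (1 j) + (2 j) + ⋯ + (j-1 j)` (so `J_1 = 0`).
Here `j : Fin d` represents the point `j+1` of `{1,…,d}`. -/
def JM (d : ℕ) (j : Fin d) : MonoidAlgebra ℂ (Equiv.Perm (Fin d)) :=
  ∑ i ∈ Finset.univ.filter (fun i => i < j),
    MonoidAlgebra.of ℂ (Equiv.Perm (Fin d)) (Equiv.swap i j)


/-!
A permutation `π` of `{0, …, n}` that moves `n` factors uniquely as `π = σ * (i n)` with `σ`
a permutation of `{0, …, n-1}` and `i < n`, namely `i = π⁻¹ n`; right multiplication by `(i n)`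
inserts the fixed point `n` of `σ` into the cycle of `i`, so `π` has exactly one cycle fewer than `σ`.
Grading permutations of `{0, …, n}` by `d` minus their number of cycles, the degree-`r` part is
therefore the degree-`r` part for `{0, …, n-1}` plus the degree-`(r-1)` part times `JM d n`. The
ordered products `∑_{j_1 < ⋯ < j_r} J_{j_1} ⋯ J_{j_r}` satisfy the same recursion, since adjoining
the largest index `n` appends the factor `JM d n` on the right.
-/

open Equiv Finset

theorem Finset.filter_apply_eq_self_permsOfFinset_insert {α : Type*} [DecidableEq α] {m : α}
    {B : Finset α} (hm : m ∉ B) :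
    (permsOfFinset (insert m B)).filter (fun π => π m = m) = permsOfFinset B := by
  ext π
  simp only [mem_filter, mem_perms_of_finset_iff, mem_insert]
  refine ⟨fun ⟨h, hπm⟩ x hx => (h hx).resolve_left ?_, fun h => ⟨fun hx => Or.inr (h hx), ?_⟩⟩
  · rintro rfl; exact hx hπm
  · by_contra hπm; exact hm (h hπm)

theorem Equiv.Perm.inv_mul_swap_apply_of_apply_eq {α : Type*} [DecidableEq α] {σ : Perm α} {m : α}
    (hσ : σ m = m) (i : α) : (σ * swap i m)⁻¹ m = i := by
  rw [mul_inv_rev, swap_inv, mul_apply, inv_eq_iff_eq.2 hσ.symm, swap_apply_right]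

namespace Equiv.Perm

variable {α : Type*} [Fintype α] [DecidableEq α]

theorem card_parts_partition_add_card_support (f : Perm α) :
    Multiset.card f.partition.parts + #f.support =
      Fintype.card α + Multiset.card f.cycleType := by
  have := f.support.card_le_univ
  rw [parts_partition, Multiset.card_add, Multiset.card_replicate]
  omega

theorem card_parts_partition_le (f : Perm α) :
    Multiset.card f.partition.parts ≤ Fintype.card α := by
  simpa [f.partition.parts_sum] using
    Multiset.card_nsmul_le_sum (fun _ h => f.partition.parts_pos h)

theorem Disjoint.card_parts_partition_mul {f g : Perm α} (h : f.Disjoint g) :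
    Multiset.card (f * g).partition.parts + Fintype.card α =
      Multiset.card f.partition.parts + Multiset.card g.partition.parts := by
  have hfg := card_parts_partition_add_card_support (f * g)
  have hf := card_parts_partition_add_card_support f
  have hg := card_parts_partition_add_card_support g
  rw [h.cycleType_mul, Multiset.card_add, h.card_support_mul] at hfg
  omega

/-- `swap x (c x) * c` is `c` with `x` cut out of the cycle: the identity if `c` is the
transposition `(x (c x))`, and otherwise a cycle on `c.support \ {x}`. -/
theorem IsCycle.card_parts_partition_swap_mul {c : Perm α} (hc : c.IsCycle) {x : α}
    (hx : c x ≠ x) :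
    Multiset.card (swap x (c x) * c).partition.parts = Multiset.card c.partition.parts + 1 := by
  have hcard := card_parts_partition_add_card_support c
  rw [hc.cycleType, Multiset.card_singleton] at hcard
  by_cases hxx : c (c x) = x
  · have hswap : swap x (c x) * c = 1 := by
      rw [hc.eq_swap_of_apply_apply_eq_self hx hxx, swap_apply_left, swap_mul_self]
    have hsupp : #c.support = 2 := by
      rw [hc.eq_swap_of_apply_apply_eq_self hx hxx]
      exact card_support_swap hx.symm
    have hone := card_parts_partition_add_card_support (1 : Perm α)
    simp only [support_one, card_empty, cycleType_one, Multiset.card_zero] at hone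
    rw [hswap]
    omega
  · have hc' := hc.swap_mul hx hxx
    have hcard' := card_parts_partition_add_card_support (swap x (c x) * c)
    rw [hc'.cycleType, Multiset.card_singleton, support_swap_mul_eq c x hxx,
      ← Finset.erase_eq, Finset.card_erase_of_mem (mem_support.2 hx)] at hcard'
    have := hc.two_le_card_support
    omega

theorem card_parts_partition_swap_mul {f : Perm α} {x : α} (hx : f x ≠ x) :
    Multiset.card (swap x (f x) * f).partition.parts = Multiset.card f.partition.parts + 1 := by
  -- only the cycle `c` of `x` is affected: `f = (f * c⁻¹) * c` with disjoint factors
  set c := f.cycleOf x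
  have hc : c.IsCycle := isCycle_cycleOf f hx
  have hcx : c x = f x := cycleOf_apply_self f x
  have hcx' : c x ≠ x := hcx ▸ hx
  have hdisj : (f * c⁻¹).Disjoint c :=
    disjoint_mul_inv_of_mem_cycleFactorsFinset (cycleOf_mem_cycleFactorsFinset_iff.2
      (mem_support.2 hx))
  have hdisj_swap : (f * c⁻¹).Disjoint (swap x (c x)) := by
    refine hdisj.mono le_rfl ?_
    rw [support_swap hcx'.symm, insert_subset_iff, singleton_subset_iff]
    exact ⟨mem_support.2 hcx', apply_mem_support.2 (mem_support.2 hcx')⟩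
  have hdisj_swap_mul : (f * c⁻¹).Disjoint (swap x (c x) * c) :=
    hdisj.mono le_rfl fun y hy => (mem_support_swap_mul_imp_mem_support_ne hy).1
  have hdecomp : swap x (f x) * f = (f * c⁻¹) * (swap x (c x) * c) := by
    rw [← mul_assoc, hdisj_swap.commute.eq, mul_assoc, inv_mul_cancel_right, hcx]
  have hf := hdisj.card_parts_partition_mul
  have hf' := hdisj_swap_mul.card_parts_partition_mul
  rw [inv_mul_cancel_right] at hf
  rw [← hdecomp, hc.card_parts_partition_swap_mul hcx'] at hf'
  omega

theorem card_parts_partition_eq_iff {f : Perm α} :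
    Multiset.card f.partition.parts = Fintype.card α ↔ f = 1 := by
  refine ⟨fun h => ?_, ?_⟩
  · by_contra hf
    obtain ⟨x, hx⟩ := not_forall.1 (mt Perm.ext_iff.2 hf)
    have := card_parts_partition_swap_mul hx
    have := (swap x (f x) * f).card_parts_partition_le
    omega
  · rintro rfl
    simp [parts_partition]

theorem card_parts_partition_mul_swap_inv_apply {f : Perm α} {x : α} (hx : f x ≠ x) :
    Multiset.card (f * swap (f⁻¹ x) x).partition.parts = Multiset.card f.partition.parts + 1 := by
  simp only [mul_swap_eq_swap_mul, coe_inv, apply_symm_apply]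
  exact card_parts_partition_swap_mul hx

theorem sum_permsOfFinset_insert_apply_ne {M : Type*} [AddCommMonoid M] {m : α} {B : Finset α}
    (hm : m ∉ B) (p : ℕ → Prop) [DecidablePred p] (F : Perm α → M) :
    ∑ π ∈ (permsOfFinset (insert m B)).filter
        (fun π => π m ≠ m ∧ p (Multiset.card π.partition.parts + 1)), F π =
      ∑ σ ∈ (permsOfFinset B).filter (fun σ => p (Multiset.card σ.partition.parts)),
        ∑ i ∈ B, F (σ * swap i m) := by
  have fix_of_mem {σ : Perm α} (hσ : σ ∈ permsOfFinset B) : σ m = m := by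
    by_contra h; exact hm (mem_perms_of_finset_iff.1 hσ h)
  rw [← sum_product']
  refine sum_nbij' (fun π => (π * swap (π⁻¹ m) m, π⁻¹ m)) (fun q => q.1 * swap q.2 m)
    ?_ ?_ (fun π _ => by simp) ?_ (fun π _ => by simp)
  · intro π hπ
    simp only [mem_filter, mem_perms_of_finset_iff, mem_insert] at hπ
    obtain ⟨hπB, hπm, hp⟩ := hπ
    have hinv : π⁻¹ m ≠ m := fun h => hπm (inv_eq_iff_eq.1 h).symm
    have hi : π⁻¹ m ∈ B := (hπB (x := π⁻¹ m) (by simpa using hinv.symm)).resolve_left hinv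
    simp only [mem_product, mem_filter, mem_perms_of_finset_iff]
    refine ⟨⟨fun {x} hx => ?_, by rwa [card_parts_partition_mul_swap_inv_apply hπm]⟩, hi⟩
    obtain rfl | hxm := eq_or_ne x m
    · simp at hx
    obtain rfl | hxi := eq_or_ne x (π⁻¹ m)
    · exact hi
    rw [mul_apply, swap_apply_of_ne_of_ne hxi hxm] at hx
    exact (hπB hx).resolve_left hxm
  · rintro ⟨σ, i⟩ hq
    simp only [mem_product, mem_filter] at hq
    obtain ⟨⟨hσB, hp⟩, hi⟩ := hq
    have hπm : (σ * swap i m) m ≠ m := by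
      rw [mul_apply, swap_apply_right, ← fix_of_mem hσB, Ne, σ.injective.eq_iff]
      rintro rfl
      exact hm hi
    have hlevel := card_parts_partition_mul_swap_inv_apply hπm
    rw [inv_mul_swap_apply_of_apply_eq (fix_of_mem hσB), mul_swap_mul_self] at hlevel
    simp only [mem_filter, mem_perms_of_finset_iff, mem_insert]
    refine ⟨fun {x} hx => ?_, hπm, hlevel ▸ hp⟩
    obtain rfl | hxm := eq_or_ne x m
    · exact Or.inl rfl
    obtain rfl | hxi := eq_or_ne x i
    · exact Or.inr hi
    rw [mul_apply, swap_apply_of_ne_of_ne hxi hxm] at hx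
    exact Or.inr (mem_perms_of_finset_iff.1 hσB hx)
  · rintro ⟨σ, i⟩ hq
    simp only [mem_product, mem_filter] at hq
    simp only [inv_mul_swap_apply_of_apply_eq (fix_of_mem hq.1.1), mul_swap_mul_self]

end Equiv.Perm

namespace Finset

theorem sum_powersetCard_succ_insert {α β : Type*} [DecidableEq α] [AddCommMonoid β] {a : α}
    {s : Finset α} (ha : a ∉ s) (r : ℕ) (f : Finset α → β) :
    ∑ t ∈ powersetCard (r + 1) (insert a s), f t =
      ∑ t ∈ powersetCard (r + 1) s, f t + ∑ t ∈ powersetCard r s, f (insert a t) := by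
  rw [powersetCard_succ_insert ha, sum_union, sum_image]
  · intro t ht u hu htu
    rw [← erase_insert (fun h => ha ((mem_powersetCard.1 ht).1 h)),
      ← erase_insert (fun h => ha ((mem_powersetCard.1 hu).1 h)), htu]
  · refine disjoint_left.2 fun t ht htu => ?_
    obtain ⟨u, -, rfl⟩ := mem_image.1 htu
    exact ha ((mem_powersetCard.1 ht).1 (mem_insert_self a u))

theorem sort_insert_of_forall_lt {α : Type*} [LinearOrder α] {a : α} {s : Finset α}
    (ha : ∀ x ∈ s, x < a) : (insert a s).sort (· ≤ ·) = s.sort (· ≤ ·) ++ [a] := by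
  refine (sortedLT_sort _).eq_of_mem_iff ?_ fun x => by simp [or_comm]
  rw [List.sortedLT_iff_pairwise, List.pairwise_append]
  exact ⟨(sortedLT_sort s).pairwise, List.pairwise_singleton _ _, by simpa using ha⟩

end Finset

open Equiv.Perm

theorem ell_eq_card_parts_partition {d : ℕ} (π : Perm (Fin d)) :
    ell π = Multiset.card π.partition.parts := by
  simp [ell, parts_partition]

theorem ell_eq_iff_eq_one {d : ℕ} {π : Perm (Fin d)} : ell π = d ↔ π = 1 := by
  simpa [ell_eq_card_parts_partition] using card_parts_partition_eq_iff (f := π)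

theorem JM_eq_sum_of_isLowerSet {d : ℕ} {a : Fin d} {s : Finset (Fin d)} (ha : ∀ x ∈ s, x < a)
    (hs : IsLowerSet (↑(insert a s) : Set (Fin d))) :
    JM d a = ∑ i ∈ s, MonoidAlgebra.of ℂ (Perm (Fin d)) (swap i a) := by
  refine sum_congr (ext fun i => ?_) fun _ _ => rfl
  simp only [mem_filter, mem_univ, true_and]
  refine ⟨fun hi => ?_, ha i⟩
  exact (mem_insert.1 (hs hi.le (mem_insert_self a s))).resolve_left hi.ne

theorem prod_map_JM_sort_insert {d : ℕ} {a : Fin d} {t : Finset (Fin d)} (ha : ∀ x ∈ t, x < a) :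
    (((insert a t).sort (· ≤ ·)).map (JM d)).prod =
      ((t.sort (· ≤ ·)).map (JM d)).prod * JM d a := by
  rw [sort_insert_of_forall_lt ha, List.map_append, List.prod_append, List.map_singleton,
    List.prod_singleton]

theorem sum_filter_ell_permsOfFinset_zero {d : ℕ} (s : Finset (Fin d)) :
    ∑ π ∈ (permsOfFinset s).filter (fun π => ell π + 0 = d),
        MonoidAlgebra.of ℂ (Perm (Fin d)) π =
      ∑ t ∈ powersetCard 0 s, ((t.sort (· ≤ ·)).map (JM d)).prod := by
  have hone : (permsOfFinset s).filter (fun π => ell π + 0 = d) = {1} := by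
    ext π
    simp only [add_zero, ell_eq_iff_eq_one, mem_filter, mem_singleton, and_iff_right_iff_imp]
    rintro rfl
    exact mem_perms_of_finset_iff.2 fun h => absurd rfl h
  rw [hone, sum_singleton, map_one, powersetCard_zero, sum_singleton, sort_empty, List.map_nil,
    List.prod_nil]

theorem sum_filter_ell_permsOfFinset_of_isLowerSet {d : ℕ} (s : Finset (Fin d))
    (hs : IsLowerSet (s : Set (Fin d))) (r : ℕ) :
    ∑ π ∈ (permsOfFinset s).filter (fun π => ell π + r = d),
        MonoidAlgebra.of ℂ (Perm (Fin d)) π =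
      ∑ t ∈ powersetCard r s, ((t.sort (· ≤ ·)).map (JM d)).prod := by
  induction s using Finset.induction_on_max generalizing r with
  | empty =>
    cases r with
    | zero => exact sum_filter_ell_permsOfFinset_zero _
    | succ r =>
      rw [powersetCard_eq_empty.2 (by simp), sum_empty, filter_eq_empty_iff.2, sum_empty]
      intro π hπ
      obtain rfl : π = 1 :=
        Perm.ext fun x => by_contra fun h => notMem_empty x (mem_perms_of_finset_iff.1 hπ h)
      rw [ell_eq_iff_eq_one.2 rfl]
      omega
  | insert a s ha ih =>
    have ha' : a ∉ s := fun h => lt_irrefl a (ha a h)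
    have hs' : IsLowerSet (s : Set (Fin d)) := fun x y hyx hx =>
      (mem_insert.1 (hs hyx (mem_insert_of_mem hx))).resolve_left (hyx.trans_lt (ha x hx)).ne
    cases r with
    | zero => exact sum_filter_ell_permsOfFinset_zero _
    | succ r =>
    calc _ = ∑ π ∈ (permsOfFinset s).filter (fun π => ell π + (r + 1) = d),
              MonoidAlgebra.of ℂ (Perm (Fin d)) π +
            ∑ σ ∈ (permsOfFinset s).filter (fun σ => ell σ + r = d),
              ∑ i ∈ s, MonoidAlgebra.of ℂ (Perm (Fin d)) (σ * swap i a) := by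
          rw [← sum_filter_add_sum_filter_not _ (fun π => π a = a), filter_comm,
            filter_apply_eq_self_permsOfFinset_insert ha', filter_filter]
          simp only [ell_eq_card_parts_partition]
          rw [← sum_permsOfFinset_insert_apply_ne ha' (fun k => k + r = d)]
          refine congrArg _ (sum_congr (filter_congr fun π _ => ?_) fun _ _ => rfl)
          omega
      _ = ∑ π ∈ (permsOfFinset s).filter (fun π => ell π + (r + 1) = d),
              MonoidAlgebra.of ℂ (Perm (Fin d)) π +
            (∑ σ ∈ (permsOfFinset s).filter (fun σ => ell σ + r = d),
              MonoidAlgebra.of ℂ (Perm (Fin d)) σ) * JM d a := by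
          rw [JM_eq_sum_of_isLowerSet ha hs, sum_mul]
          simp only [mul_sum, map_mul]
      _ = _ := by
          rw [ih hs', ih hs', sum_mul, sum_powersetCard_succ_insert ha']
          refine congrArg _ (sum_congr rfl fun t ht => ?_)
          exact (prod_map_JM_sort_insert fun x hx => ha x ((mem_powersetCard.1 ht).1 hx)).symm

theorem level_eq_esymm_JM_general (d : ℕ) (r : ℕ) (hr : r ≤ d - 1) :
    ∑ π ∈ Finset.univ.filter (fun π : Equiv.Perm (Fin d) => ell π = d - r),
        MonoidAlgebra.of ℂ (Equiv.Perm (Fin d)) π =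
      ∑ s ∈ Finset.powersetCard r (Finset.univ : Finset (Fin d)),
        ((s.sort (· ≤ ·)).map (JM d)).prod := by
  rw [← sum_filter_ell_permsOfFinset_of_isLowerSet univ (by simpa using isLowerSet_univ) r]
  refine sum_congr (ext fun π => ?_) fun _ _ => rfl
  simp only [mem_filter, mem_univ, true_and, mem_perms_of_finset_iff, implies_true]
  omega

/-- Jucys–Murphy correspondence, polynomial form. For `0 ≤ r ≤ d-1`, the sum in
`ℂ[S_d]` of all permutations with exactly `d - r` cycles (counting fixed points) equals the
elementary symmetric polynomial `e_r` evaluated at the Jucys–Murphy elements: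
`∑_{ℓ(π) = d-r} π = ∑_{j_1 < ⋯ < j_r} J_{j_1} ⋯ J_{j_r}`. -/
theorem level_eq_esymm_JM (d : ℕ) (hd : 1 ≤ d) (r : ℕ) (hr : r ≤ d - 1) :
    ∑ π ∈ Finset.univ.filter (fun π : Equiv.Perm (Fin d) => ell π = d - r),
        MonoidAlgebra.of ℂ (Equiv.Perm (Fin d)) π =
      ∑ s ∈ Finset.powersetCard r (Finset.univ : Finset (Fin d)),
        ((s.sort (· ≤ ·)).map (JM d)).prod :=
  level_eq_esymm_JM_general d r hr
end
end

section
/- Let d ≥ 1 and let ℂ[S_d] be the complex group algebra of S_d with Jucys–Murphy elements J_1 = 0 and J_j = ∑_{i=1}^{j−1} (i j). Then for every scalar q, the exponential distance element ∑_{π ∈ S_d} q^{d − ℓ(π)} π equals the product (1 + qJ_1)(1 + qJ_2)⋯(1 + qJ_d) in ℂ[S_d]. -/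
/-!
Every `π ∈ S_{d+1}` factors uniquely as `π = σ · (i, d+1)` with `σ ∈ S_d` fixing `d+1` and
`i ≤ d+1` (the factor being trivial when `i = d+1`). For `i ≠ d+1`, right multiplication by
`(i, d+1)` inserts the fixed point `d+1` into the cycle of `i`, so the number of cycles drops by
exactly one. Hence `Ω_{d+1} = Ω_d (1 + q J_{d+1})` for `Ω_d = ∑_{σ ∈ S_d} q^{d-ℓ(σ)} σ`, and the
theorem follows by induction on `d`.
-/

noncomputable section

open Finset

namespace Equiv.Perm

variable {α : Type*} [DecidableEq α] [Fintype α]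

theorem card_cycleType_le_card_support_s8 (σ : Perm α) :
    Multiset.card σ.cycleType ≤ #σ.support := by
  rw [← sum_cycleType]
  simpa using Multiset.card_nsmul_le_sum fun _ h => (one_lt_of_mem_cycleType h).le

theorem card_cycleType_eq_of_mem_cycleFactorsFinset {f c : Perm α}
    (hc : c ∈ f.cycleFactorsFinset) :
    Multiset.card f.cycleType = Multiset.card (f * c⁻¹).cycleType + 1 := by
  conv_lhs => rw [← inv_mul_cancel_right f c]
  rw [(disjoint_mul_inv_of_mem_cycleFactorsFinset hc).cycleType_mul,
    (mem_cycleFactorsFinset_iff.1 hc).1.cycleType, Multiset.card_add, Multiset.card_singleton]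

theorem card_support_eq_of_mem_cycleFactorsFinset {f c : Perm α}
    (hc : c ∈ f.cycleFactorsFinset) :
    #f.support = #(f * c⁻¹).support + #c.support := by
  conv_lhs => rw [← inv_mul_cancel_right f c]
  exact (disjoint_mul_inv_of_mem_cycleFactorsFinset hc).card_support_mul

/-- `swap a (f a) * f` removes `a` from its cycle: that cycle loses one point, or vanishes when it
is the transposition `(a, f a)`; the other cycles of `f` reappear conjugated by `swap a (f a)`. -/
theorem card_support_swap_mul_add_card_cycleType {f : Perm α} {a : α} (ha : f a ≠ a) :
    #(swap a (f a) * f).support + Multiset.card f.cycleType + 1 =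
      #f.support + Multiset.card (swap a (f a) * f).cycleType := by
  set c := f.cycleOf a
  have hcf : c ∈ f.cycleFactorsFinset := cycleOf_mem_cycleFactorsFinset_iff.2 (mem_support.2 ha)
  have hc : c.IsCycle := (mem_cycleFactorsFinset_iff.1 hcf).1
  have hca : c a = f a := cycleOf_apply_self f a
  have hca' : c a ≠ a := hca ▸ ha
  rw [← hca]
  set s := swap a (c a)
  have hconj : s * f * (s * c)⁻¹ = s * (f * c⁻¹) * s⁻¹ := by group
  have hcycle := card_cycleType_eq_of_mem_cycleFactorsFinset hcf
  have hsupp := card_support_eq_of_mem_cycleFactorsFinset hcf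
  by_cases h2 : c (c a) = a
  · have hcs : s * c = 1 := by
      rw [hc.eq_swap_of_apply_apply_eq_self hca' h2, swap_mul_self]
    rw [hcs, inv_one, mul_one] at hconj
    rw [hconj, cycleType_conj, card_support_conj]
    have : #c.support = 2 := by
      rw [hc.eq_swap_of_apply_apply_eq_self hca' h2, card_support_swap hca'.symm]
    omega
  · have hsc : (s * c).IsCycle := hc.swap_mul hca' h2
    have hsupp_sc : (s * c).support = c.support.erase a := by
      rw [support_swap_mul_eq c a h2, sdiff_singleton_eq_erase]
    have hmem : s * c ∈ (s * f).cycleFactorsFinset := by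
      refine mem_cycleFactorsFinset_iff.2 ⟨hsc, fun x hx => ?_⟩
      rw [hsupp_sc, mem_erase] at hx
      simp only [coe_mul, Function.comp_apply, (mem_cycleFactorsFinset_iff.1 hcf).2 x hx.2]
    have hcycle_sf := card_cycleType_eq_of_mem_cycleFactorsFinset hmem
    have hsupp_sf := card_support_eq_of_mem_cycleFactorsFinset hmem
    rw [hconj, cycleType_conj] at hcycle_sf
    rw [hconj, card_support_conj, hsupp_sc, card_erase_of_mem (mem_support.2 hca')] at hsupp_sf
    have : 0 < #c.support := card_pos.2 ⟨a, mem_support.2 hca'⟩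
    omega

/-- Inverting turns insertion of the fixed point `a` after `i` into removal of `a`. -/
theorem card_support_add_card_cycleType_mul_swap {τ : Perm α} {a i : α} (ha : τ a = a)
    (hi : i ≠ a) :
    #τ.support + Multiset.card (τ * swap i a).cycleType + 1 =
      #(τ * swap i a).support + Multiset.card τ.cycleType := by
  have hfa : (τ * swap i a)⁻¹ a = i := by
    rw [mul_inv_rev, swap_inv, coe_mul, Function.comp_apply, inv_eq_iff_eq.2 ha.symm,
      swap_apply_right]
  have hremove : swap a i * (τ * swap i a)⁻¹ = τ⁻¹ := by
    rw [mul_inv_rev, swap_inv, ← mul_assoc, swap_comm, swap_mul_self, one_mul]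
  have := card_support_swap_mul_add_card_cycleType (f := (τ * swap i a)⁻¹) (a := a)
    (by rwa [hfa])
  rwa [hfa, hremove, support_inv, support_inv, cycleType_inv, cycleType_inv] at this

end Equiv.Perm

open Equiv Equiv.Perm

def permCastSucc (d : ℕ) : Perm (Fin d) →* Perm (Fin (d + 1)) :=
  extendDomainHom (Fin.castLEquiv d.le_succ)

theorem permCastSucc_apply_castSucc {d : ℕ} (σ : Perm (Fin d)) (i : Fin d) :
    permCastSucc d σ i.castSucc = (σ i).castSucc :=
  extendDomain_apply_image σ (Fin.castLEquiv d.le_succ) i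

theorem permCastSucc_apply_last {d : ℕ} (σ : Perm (Fin d)) :
    permCastSucc d σ (Fin.last d) = Fin.last d :=
  extendDomain_apply_not_subtype σ _ (lt_irrefl d)

theorem permCastSucc_swap {d : ℕ} (i j : Fin d) :
    permCastSucc d (swap i j) = swap i.castSucc j.castSucc := by
  ext x
  induction x using Fin.lastCases with
  | last =>
    rw [permCastSucc_apply_last, swap_apply_of_ne_of_ne (Fin.castSucc_lt_last i).ne'
      (Fin.castSucc_lt_last j).ne']
  | cast y => rw [permCastSucc_apply_castSucc, (Fin.castSucc_injective d).swap_apply]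

theorem sub_ell_eq_card_support_sub {d : ℕ} (σ : Perm (Fin d)) :
    d - ell σ = #σ.support - Multiset.card σ.cycleType := by
  have := card_cycleType_le_card_support_s8 σ
  have := (card_le_univ σ.support).trans_eq (Fintype.card_fin d)
  unfold ell
  omega

theorem sub_ell_permCastSucc_mul_swap {d : ℕ} (σ : Perm (Fin d)) (i : Fin (d + 1)) :
    d + 1 - ell (permCastSucc d σ * swap i (Fin.last d)) =
      d - ell σ + if i = Fin.last d then 0 else 1 := by
  have hsupp : #(permCastSucc d σ).support = #σ.support := card_support_extend_domain _
  have hcycle : (permCastSucc d σ).cycleType = σ.cycleType := cycleType_extendDomain _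
  rw [sub_ell_eq_card_support_sub, sub_ell_eq_card_support_sub]
  split_ifs with hi
  · rw [hi, swap_self, ← Perm.one_def, mul_one, hsupp, hcycle, add_zero]
  · have hmerge := card_support_add_card_cycleType_mul_swap (permCastSucc_apply_last σ) hi
    rw [hsupp, hcycle] at hmerge
    have := card_cycleType_le_card_support_s8 (permCastSucc d σ * swap i (Fin.last d))
    have := card_cycleType_le_card_support_s8 σ
    omega

theorem bijective_permCastSucc_mul_swap (d : ℕ) :
    Function.Bijective fun p : Perm (Fin d) × Fin (d + 1) =>
      permCastSucc d p.1 * swap p.2 (Fin.last d) := by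
  refine (Fintype.bijective_iff_injective_and_card _).2 ⟨fun ⟨σ, i⟩ ⟨τ, j⟩ h => ?_, ?_⟩
  · dsimp only at h
    have hlast : ∀ (σ : Perm (Fin d)) (i : Fin (d + 1)),
        (permCastSucc d σ * swap i (Fin.last d))⁻¹ (Fin.last d) = i := fun σ i => by
      rw [mul_inv_rev, swap_inv, coe_mul, Function.comp_apply, ← map_inv,
        permCastSucc_apply_last, swap_apply_right]
    have hij : i = j := by rw [← hlast σ i, ← hlast τ j, h]
    subst hij
    rw [(extendDomainHom_injective _).eq_iff.1 (mul_right_cancel h)]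
  · simp [Fintype.card_perm, Nat.factorial_succ, mul_comm]

open MonoidAlgebra

def castSuccAlgHom (d : ℕ) :
    MonoidAlgebra ℂ (Perm (Fin d)) →ₐ[ℂ] MonoidAlgebra ℂ (Perm (Fin (d + 1))) :=
  mapDomainAlgHom ℂ ℂ (permCastSucc d)

theorem castSuccAlgHom_of {d : ℕ} (σ : Perm (Fin d)) :
    castSuccAlgHom d (of ℂ _ σ) = of ℂ _ (permCastSucc d σ) := by
  simp [castSuccAlgHom]

theorem castSuccAlgHom_JM {d : ℕ} (j : Fin d) :
    castSuccAlgHom d (JM d j) = JM (d + 1) j.castSucc := by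
  unfold JM
  rw [map_sum]
  refine sum_bij (fun i _ => i.castSucc) (by simp) (fun _ _ _ _ => Fin.castSucc_inj.1)
    (fun i hi => ⟨i.castPred (Fin.ne_last_of_lt (mem_filter.1 hi).2),
      by simpa [Fin.castPred_lt_iff] using hi, Fin.castSucc_castPred _ _⟩)
    fun i _ => by rw [castSuccAlgHom_of, permCastSucc_swap]

theorem one_add_smul_JM_last_eq_sum (d : ℕ) (q : ℂ) :
    1 + q • JM (d + 1) (Fin.last d) =
      ∑ i, q ^ (if i = Fin.last d then 0 else 1) • of ℂ _ (swap i (Fin.last d)) := by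
  rw [← add_sum_erase _ _ (mem_univ (Fin.last d)), if_pos rfl, pow_zero, one_smul, swap_self,
    ← Perm.one_def, map_one, JM, smul_sum]
  congr 1
  refine sum_congr (by ext; simp [Fin.lt_last_iff_ne_last]) fun i hi => ?_
  rw [if_neg (ne_of_mem_erase hi), pow_one]

def expDistElement (d : ℕ) (q : ℂ) : MonoidAlgebra ℂ (Perm (Fin d)) :=
  ∑ π, q ^ (d - ell π) • of ℂ _ π

theorem expDistElement_zero (q : ℂ) : expDistElement 0 q = 1 := by
  rw [expDistElement, Fintype.sum_unique]
  simp [MonoidAlgebra.one_def]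

theorem expDistElement_succ (d : ℕ) (q : ℂ) :
    expDistElement (d + 1) q =
      castSuccAlgHom d (expDistElement d q) * (1 + q • JM (d + 1) (Fin.last d)) := by
  rw [expDistElement, expDistElement,
    ← Fintype.sum_bijective _ (bijective_permCastSucc_mul_swap d)
    (fun p : Perm (Fin d) × Fin (d + 1) =>
      q ^ (d + 1 - ell (permCastSucc d p.1 * swap p.2 (Fin.last d))) •
        of ℂ _ (permCastSucc d p.1 * swap p.2 (Fin.last d))) _ fun _ => rfl,
    one_add_smul_JM_last_eq_sum, map_sum, Fintype.sum_mul_sum, Fintype.sum_prod_type]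
  refine Fintype.sum_congr _ _ fun σ => Fintype.sum_congr _ _ fun i => ?_
  rw [sub_ell_permCastSucc_mul_swap, pow_add, map_mul, map_smul, castSuccAlgHom_of,
    smul_mul_smul_comm]

theorem prod_ofFn_one_add_smul_JM_succ (d : ℕ) (q : ℂ) :
    (List.ofFn fun j : Fin (d + 1) => 1 + q • JM (d + 1) j).prod =
      castSuccAlgHom d (List.ofFn fun j : Fin d => 1 + q • JM d j).prod *
        (1 + q • JM (d + 1) (Fin.last d)) := by
  simp only [List.ofFn_succ', List.concat_eq_append, List.prod_append, List.prod_singleton,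
    map_list_prod, List.map_ofFn, Function.comp_def, map_add, map_one, map_smul,
    castSuccAlgHom_JM]

theorem omega_eq_prod_JM_general (d : ℕ) (q : ℂ) :
    ∑ π : Equiv.Perm (Fin d),
        q ^ (d - ell π) • MonoidAlgebra.of ℂ (Equiv.Perm (Fin d)) π =
      (List.ofFn (fun j : Fin d => 1 + q • JM d j)).prod := by
  change expDistElement d q = _
  induction d with
  | zero => rw [expDistElement_zero, List.ofFn_zero, List.prod_nil]
  | succ d ih => rw [expDistElement_succ, ih, prod_ofFn_one_add_smul_JM_succ]

/-- For every scalar `q`, the exponential distance element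
`∑_{π ∈ S_d} q^(d - ℓ(π)) π` of `ℂ[S_d]` factors as the product
`(1 + qJ_1)(1 + qJ_2) ⋯ (1 + qJ_d)` over the Jucys–Murphy elements. -/
theorem omega_eq_prod_JM (d : ℕ) (hd : 1 ≤ d) (q : ℂ) :
    ∑ π : Equiv.Perm (Fin d),
        q ^ (d - ell π) • MonoidAlgebra.of ℂ (Equiv.Perm (Fin d)) π =
      (List.ofFn (fun j : Fin d => 1 + q • JM d j)).prod :=
  omega_eq_prod_JM_general d q
end
end

section
/- Let d ≥ 1 and let f be a symmetric polynomial in d variables with complex coefficients. Then the element f(J_1, …, J_d) ∈ ℂ[S_d], obtained by evaluating f at the Jucys–Murphy elements, lies in the center of the group algebra ℂ[S_d]. -/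
noncomputable section

/-- Evaluation of a polynomial in `d` variables at the Jucys–Murphy elements `J_1, …, J_d`
(each monomial is evaluated as the ordered product `J_1^{m_1} ⋯ J_d^{m_d}`; since the
Jucys–Murphy elements commute, the order is immaterial). -/
def evalJM (d : ℕ) (f : MvPolynomial (Fin d) ℂ) : MonoidAlgebra ℂ (Equiv.Perm (Fin d)) :=
  ∑ m ∈ f.support, f.coeff m • (List.ofFn fun j : Fin d => JM d j ^ m j).prod

/-
Let `s = (a b)` with `b = a + 1`. Then `s` commutes with `J_j` for `j ≠ a, b`, and
`s J_a = J_b s - 1`, `s J_b = J_a s + 1`, so `s` commutes with `J_a + J_b` and `J_a J_b`.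
In `∏_j (t + J_j)` the factors of `a` and `b` combine to `t² + (J_a + J_b) t + J_a J_b`, so `s`
commutes with the coefficients of this product, the elementary symmetric polynomials in the `J_j`.
By the fundamental theorem of symmetric polynomials `s` commutes with `f(J_1, …, J_d)`, and the
adjacent transpositions generate `S_d`.
-/

namespace MvPolynomial

variable {σ R : Type*} [Fintype σ] [CommRing R]

theorem IsSymmetric.mem_adjoin_range_esymm {p : MvPolynomial σ R} (hp : p.IsSymmetric) :
    p ∈ Algebra.adjoin R (Set.range (esymm σ R)) := by
  obtain ⟨q, hq⟩ := esymmAlgHom_surjective R le_rfl ⟨p, hp⟩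
  have hqp : aeval (fun i : Fin (Fintype.card σ) ↦ esymm σ R (i + 1)) q = p := by
    rw [← esymmAlgHom_apply, hq]
  have hmem := aeval_range (R := R) (fun i : Fin (Fintype.card σ) ↦ esymm σ R (i + 1)) ▸
    AlgHom.mem_range_self _ q
  exact hqp ▸ Algebra.adjoin_mono (Set.range_comp_subset_range _ _) hmem

theorem commute_esymm_of_commute_pair {A : Type*} [DecidableEq σ] [Ring A] [Algebra R A]
    (φ : MvPolynomial σ R →ₐ[R] A) {y : A} {a b : σ} (hab : a ≠ b)
    (hrest : ∀ i, i ≠ a → i ≠ b → Commute y (φ (X i)))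
    (hsum : Commute y (φ (X a + X b))) (hprod : Commute y (φ (X a * X b))) (n : ℕ) :
    Commute y (φ (esymm σ R n)) := by
  rcases lt_or_ge (Fintype.card σ) n with hn | hn
  · rw [esymm, Finset.powersetCard_eq_empty.mpr (by rwa [Finset.card_univ]), Finset.sum_empty,
      map_zero]
    exact .zero_right y
  -- Vieta: the coefficients of `∏ i, (T + X i)` are the `esymm σ R n`, and after grouping the
  -- factors of `a` and `b` every factor of its image under `φ` commutes with `C y`.
  let T : Polynomial (MvPolynomial σ R) := Polynomial.X
  let lin (i : σ) := T + Polynomial.C (X i)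
  have hsplit : ∏ i, lin i = (T ^ 2 + Polynomial.C (X a + X b) * T + Polynomial.C (X a * X b)) *
      ∏ i ∈ (Finset.univ.erase a).erase b, lin i := by
    rw [← Finset.mul_prod_erase _ _ (Finset.mem_univ a),
      ← Finset.mul_prod_erase _ _ (Finset.mem_erase.mpr ⟨hab.symm, Finset.mem_univ b⟩)]
    simp only [lin, map_add, map_mul]
    ring
  have hX : Commute (Polynomial.C y) Polynomial.X := (Polynomial.commute_X _).symm
  have hpoly : Commute (Polynomial.C y) ((∏ i, lin i).map φ.toRingHom) := by
    rw [hsplit, Polynomial.map_mul]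
    refine .mul_right ?_ ?_
    · simp only [T, Polynomial.map_add, Polynomial.map_mul, Polynomial.map_pow, Polynomial.map_X,
        Polynomial.map_C, AlgHom.toRingHom_eq_coe, RingHom.coe_coe]
      have h1 : Commute (Polynomial.C y) (Polynomial.C (φ (X a + X b))) := hsum.map Polynomial.C
      have h2 : Commute (Polynomial.C y) (Polynomial.C (φ (X a * X b))) := hprod.map Polynomial.C
      exact ((hX.pow_right 2).add_right (h1.mul_right hX)).add_right h2
    · refine Finset.prod_induction lin (fun p ↦ Commute (Polynomial.C y) (p.map φ.toRingHom))
        (fun p q hp hq ↦ ?_) ?_ fun i hi ↦ ?_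
      · rw [Polynomial.map_mul]; exact hp.mul_right hq
      · rw [Polynomial.map_one]; exact .one_right _
      obtain ⟨hib, hia⟩ : i ≠ b ∧ i ≠ a := by simpa using hi
      simp only [lin, T, Polynomial.map_add, Polynomial.map_X, Polynomial.map_C,
        AlgHom.toRingHom_eq_coe, RingHom.coe_coe]
      exact hX.add_right ((hrest i hia hib).map Polynomial.C)
  have hcoeff := congrArg (Polynomial.coeff · (Fintype.card σ - n)) hpoly.eq
  simp only [Polynomial.coeff_C_mul, Polynomial.coeff_mul_C, Polynomial.coeff_map, lin, T,
    prod_X_add_C_coeff R σ _ (Nat.sub_le _ _), Nat.sub_sub_self hn, AlgHom.toRingHom_eq_coe,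
    RingHom.coe_coe] at hcoeff
  exact hcoeff

theorem IsSymmetric.commute_of_commute_pair {A : Type*} [DecidableEq σ] [Ring A] [Algebra R A]
    (φ : MvPolynomial σ R →ₐ[R] A) {y : A} {a b : σ} (hab : a ≠ b)
    (hrest : ∀ i, i ≠ a → i ≠ b → Commute y (φ (X i)))
    (hsum : Commute y (φ (X a + X b))) (hprod : Commute y (φ (X a * X b)))
    {p : MvPolynomial σ R} (hp : p.IsSymmetric) : Commute y (φ p) := by
  have hle :
      Algebra.adjoin R (Set.range (esymm σ R)) ≤ (Subalgebra.centralizer R {y}).comap φ :=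
    Algebra.adjoin_le <| by
      rintro _ ⟨n, rfl⟩ _ rfl
      exact commute_esymm_of_commute_pair φ hab hrest hsum hprod n
  exact hle hp.mem_adjoin_range_esymm y rfl

end MvPolynomial

open Equiv MonoidAlgebra

theorem Equiv.swap_apply_lt_iff {α : Type*} [DecidableEq α] [LT α] {a b j : α}
    (h : a < j ↔ b < j) (m : α) : swap a b m < j ↔ m < j := by
  rcases eq_or_ne m a with rfl | hma
  · simp [h]
  rcases eq_or_ne m b with rfl | hmb
  · simp [h]
  rw [swap_apply_of_ne_of_ne hma hmb]

theorem CovBy.filter_lt_eq_insert {α : Type*} [Fintype α] [LinearOrder α] {a b : α}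
    (hab : a ⋖ b) : Finset.univ.filter (· < b) = insert a (Finset.univ.filter (· < a)) := by
  ext i
  simpa [← le_iff_eq_or_lt] using ⟨hab.le_of_lt, fun h ↦ h.trans_lt hab.lt⟩

theorem Fin.castSucc_covBy_succ {n : ℕ} (i : Fin n) : i.castSucc ⋖ i.succ :=
  ⟨Fin.castSucc_lt_succ, fun j h₁ h₂ ↦ by
    rw [Fin.lt_def, Fin.val_castSucc] at h₁
    rw [Fin.lt_def, Fin.val_succ] at h₂
    omega⟩

theorem MonoidAlgebra.commute_of_forall_commute_of {k G : Type*} [CommSemiring k] [Monoid G]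
    {z : MonoidAlgebra k G} (h : ∀ g, Commute (of k G g) z) (x : MonoidAlgebra k G) :
    Commute x z := by
  induction x using MonoidAlgebra.induction_on with
  | of g => exact h g
  | add p q hp hq => exact hp.add_left hq
  | smul r p hp => exact hp.smul_left r

theorem commute_of_forall_swap_covBy {k : Type*} [CommSemiring k] {d : ℕ}
    {z : MonoidAlgebra k (Perm (Fin d))}
    (h : ∀ a b : Fin d, a ⋖ b → Commute (of k _ (swap a b)) z) (g : Perm (Fin d)) :
    Commute (of k _ g) z := by
  cases d with
  | zero => rw [Subsingleton.elim g 1, map_one]; exact .one_left z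
  | succ n =>
    have hle : Submonoid.closure (Set.range fun i : Fin n ↦ swap i.castSucc i.succ) ≤
        (Submonoid.centralizer {z}).comap (of k _) := Submonoid.closure_le.mpr <| by
      rintro _ ⟨i, rfl⟩ _ rfl
      exact (h _ _ (Fin.castSucc_covBy_succ i)).symm
    exact Commute.symm (hle (Perm.mclosure_swap_castSucc_succ n ▸ Submonoid.mem_top g) z rfl)

section JucysMurphy

variable {d : ℕ}

theorem of_mul_JM (σ : Perm (Fin d)) (j : Fin d) :
    of ℂ _ σ * JM d j =
      (∑ i ∈ Finset.univ.filter (· < j), of ℂ _ (swap (σ i) (σ j))) * of ℂ _ σ := by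
  rw [JM, Finset.mul_sum, Finset.sum_mul]
  refine Finset.sum_congr rfl fun i _ ↦ ?_
  rw [← map_mul, ← map_mul, swap_apply_apply, inv_mul_cancel_right]

theorem commute_of_JM_of_apply_eq {σ : Perm (Fin d)} {j : Fin d} (hj : σ j = j)
    (hσ : ∀ i, σ i < j ↔ i < j) : Commute (of ℂ _ σ) (JM d j) := by
  rw [Commute, SemiconjBy, of_mul_JM, hj, JM]
  congr 1
  exact Finset.sum_equiv σ (by simp [hσ]) fun _ _ ↦ rfl

theorem JM_commute (i j : Fin d) : Commute (JM d i) (JM d j) := by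
  wlog hij : i < j generalizing i j
  · rcases (not_lt.mp hij).eq_or_lt with rfl | hji
    · exact .refl _
    · exact (this j i hji).symm
  refine .sum_left _ _ _ fun k hk ↦ ?_
  have hki : k < i := (Finset.mem_filter.mp hk).2
  exact commute_of_JM_of_apply_eq (swap_apply_of_ne_of_ne (hki.trans hij).ne' hij.ne')
    (swap_apply_lt_iff (iff_of_true (hki.trans hij) hij))

section Adjacent

variable {a b : Fin d}

theorem commute_of_swap_JM_of_ne (hab : a ⋖ b) {j : Fin d} (hja : j ≠ a) (hjb : j ≠ b) :
    Commute (of ℂ _ (swap a b)) (JM d j) :=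
  commute_of_JM_of_apply_eq (swap_apply_of_ne_of_ne hja hjb) <| swap_apply_lt_iff
    ⟨fun h ↦ (hab.ge_of_gt h).lt_of_ne hjb.symm, hab.lt.trans⟩

theorem of_swap_mul_JM_left (hab : a ⋖ b) :
    of ℂ _ (swap a b) * JM d a = JM d b * of ℂ _ (swap a b) - 1 := by
  rw [of_mul_JM, swap_apply_left, JM, hab.filter_lt_eq_insert, Finset.sum_insert (by simp),
    add_mul, ← map_mul, swap_mul_self, map_one, add_sub_cancel_left]
  refine congrArg (· * _) (Finset.sum_congr rfl fun i hi ↦ ?_)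
  have hia : i < a := (Finset.mem_filter.mp hi).2
  rw [swap_apply_of_ne_of_ne hia.ne (hia.trans hab.lt).ne]

theorem of_swap_mul_JM_right (hab : a ⋖ b) :
    of ℂ _ (swap a b) * JM d b = JM d a * of ℂ _ (swap a b) + 1 := by
  rw [of_mul_JM, swap_apply_right, hab.filter_lt_eq_insert, Finset.sum_insert (by simp),
    swap_apply_left, add_mul, swap_comm, ← map_mul, swap_mul_self, map_one, add_comm, JM]
  refine congrArg (· * _ + 1) (Finset.sum_congr rfl fun i hi ↦ ?_)
  have hia : i < a := (Finset.mem_filter.mp hi).2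
  rw [swap_apply_of_ne_of_ne hia.ne (hia.trans hab.lt).ne]

theorem commute_of_swap_JM_add (hab : a ⋖ b) :
    Commute (of ℂ _ (swap a b)) (JM d a + JM d b) := by
  rw [Commute, SemiconjBy, mul_add, of_swap_mul_JM_left hab, of_swap_mul_JM_right hab, add_mul]
  abel

theorem commute_of_swap_JM_mul (hab : a ⋖ b) :
    Commute (of ℂ _ (swap a b)) (JM d a * JM d b) := by
  rw [Commute, SemiconjBy, ← mul_assoc, of_swap_mul_JM_left hab, sub_mul, mul_assoc,
    of_swap_mul_JM_right hab, (JM_commute a b).eq]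
  noncomm_ring

end Adjacent

end JucysMurphy

-- `aeval` needs a commutative target: the subalgebra generated by the Jucys–Murphy elements.
def JMSubalgebra (d : ℕ) : Subalgebra ℂ (MonoidAlgebra ℂ (Perm (Fin d))) :=
  Algebra.adjoin ℂ (Set.range (JM d))

instance (d : ℕ) : IsMulCommutative (JMSubalgebra d) :=
  Algebra.isMulCommutative_adjoin ℂ <| by
    rintro _ ⟨i, rfl⟩ _ ⟨j, rfl⟩
    exact (JM_commute i j).eq

open scoped IsMulCommutative

def evalJMAlgHom (d : ℕ) :
    MvPolynomial (Fin d) ℂ →ₐ[ℂ] MonoidAlgebra ℂ (Perm (Fin d)) :=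
  (JMSubalgebra d).val.comp
    (MvPolynomial.aeval fun j ↦ ⟨JM d j, Algebra.subset_adjoin ⟨j, rfl⟩⟩)

theorem evalJMAlgHom_X {d : ℕ} (j : Fin d) : evalJMAlgHom d (.X j) = JM d j := by
  simp [evalJMAlgHom]

theorem evalJM_eq_evalJMAlgHom {d : ℕ} (f : MvPolynomial (Fin d) ℂ) :
    evalJM d f = evalJMAlgHom d f := by
  rw [evalJM, evalJMAlgHom, AlgHom.comp_apply, MvPolynomial.aeval_def, MvPolynomial.eval₂_eq',
    map_sum]
  refine Finset.sum_congr rfl fun m _ ↦ ?_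
  rw [← Algebra.smul_def, map_smul, ← List.prod_ofFn, map_list_prod, List.map_ofFn]
  rfl

theorem evalJM_symmetric_central_general (d : ℕ)
    (f : MvPolynomial (Fin d) ℂ) (hf : f.IsSymmetric) :
    ∀ x : MonoidAlgebra ℂ (Equiv.Perm (Fin d)), evalJM d f * x = x * evalJM d f := by
  have hswap (a b : Fin d) (hab : a ⋖ b) :
      Commute (of ℂ _ (swap a b)) (evalJMAlgHom d f) := by
    refine hf.commute_of_commute_pair (evalJMAlgHom d) hab.ne (fun j hja hjb ↦ ?_) ?_ ?_
    · rw [evalJMAlgHom_X]; exact commute_of_swap_JM_of_ne hab hja hjb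
    · rw [map_add, evalJMAlgHom_X, evalJMAlgHom_X]; exact commute_of_swap_JM_add hab
    · rw [map_mul, evalJMAlgHom_X, evalJMAlgHom_X]; exact commute_of_swap_JM_mul hab
  intro x
  rw [evalJM_eq_evalJMAlgHom]
  exact (commute_of_forall_commute_of (commute_of_forall_swap_covBy hswap) x).symm.eq

/-- Jucys. Every symmetric polynomial function of the Jucys–Murphy elements
lies in the center of the group algebra `ℂ[S_d]`. -/
theorem evalJM_symmetric_central (d : ℕ) (hd : 1 ≤ d)
    (f : MvPolynomial (Fin d) ℂ) (hf : f.IsSymmetric) :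
    ∀ x : MonoidAlgebra ℂ (Equiv.Perm (Fin d)), evalJM d f * x = x * evalJM d f :=
  evalJM_symmetric_central_general d f hf
end
end

section
/- Let d ≥ 1 and r ≥ 0. For all ρ, σ ∈ S_d, the number W^r_≤(ρ,σ) of weakly increasing r-step walks from ρ to σ in the Hurwitz–Cayley graph equals the number W^r_≥(ρ,σ) of weakly decreasing r-step walks from ρ to σ. -/
noncomputable section

/-- `Wle d r ρ σ` is the number of weakly monotone (weakly increasing) `r`-step walks `ρ → σ` in
the Hurwitz–Cayley graph: sequences of transpositions `((i_1 j_1), …, (i_r j_r))` with `i_k < j_k`,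
`j_1 ≤ j_2 ≤ ⋯ ≤ j_r` and `ρ·(i_1 j_1)⋯(i_r j_r) = σ`. -/
def Wle (d r : ℕ) (ρ σ : Equiv.Perm (Fin d)) : ℕ :=
  Nat.card {l : List (Fin d × Fin d) //
    l.length = r ∧ (∀ p ∈ l, p.1 < p.2) ∧ (l.map Prod.snd).Pairwise (· ≤ ·) ∧
      ρ * (l.map toSwap).prod = σ}

/-- `Wge d r ρ σ` is the number of weakly decreasing `r`-step walks `ρ → σ` in the
Hurwitz–Cayley graph: sequences of transpositions `((i_1 j_1), …, (i_r j_r))` with `i_k < j_k`,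
`j_1 ≥ j_2 ≥ ⋯ ≥ j_r` and `ρ·(i_1 j_1)⋯(i_r j_r) = σ`. -/
def Wge (d r : ℕ) (ρ σ : Equiv.Perm (Fin d)) : ℕ :=
  Nat.card {l : List (Fin d × Fin d) //
    l.length = r ∧ (∀ p ∈ l, p.1 < p.2) ∧ (l.map Prod.snd).Pairwise (· ≥ ·) ∧
      ρ * (l.map toSwap).prod = σ}

/-!
Let `X_j = ∑_{i < j} (i j)` be the Jucys–Murphy elements of the group algebra of `S_d`. Walks
from `ρ` to `σ` whose transpositions have larger points `j_1, …, j_r` are counted by the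
coefficient of `ρ⁻¹σ` in `X_{j_1} ⋯ X_{j_r}`. The `X_j` commute: conjugating by `(a b)` with
`a, b < k` permutes the summands of `X_k`, and every summand of `X_j`, `j < k`, is such a
transposition. So that count is unchanged when the sequence `j_1, …, j_r` is reversed, and
reversal exchanges weakly increasing and weakly decreasing sequences.
-/

open Equiv Finset

section JucysMurphy

variable (R : Type*) [Semiring R] {α : Type*} [LinearOrder α] [LocallyFiniteOrderBot α]

def jucysMurphy (j : α) : MonoidAlgebra R (Perm α) :=
  ∑ i ∈ Iio j, MonoidAlgebra.single (swap i j) 1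

variable {R}

theorem commute_single_swap_jucysMurphy {a b k : α} (ha : a < k) (hb : b < k) :
    Commute (MonoidAlgebra.single (swap a b) (1 : R)) (jucysMurphy R k) := by
  have hk : swap a b k = k := swap_apply_of_ne_of_ne ha.ne' hb.ne'
  have hmaps : ∀ i ∈ Iio k, swap a b i ∈ Iio k := fun i hi ↦ by
    rw [mem_Iio] at hi
    rw [mem_Iio, swap_apply_def]
    split_ifs <;> assumption
  simp only [Commute, SemiconjBy, jucysMurphy, mul_sum, sum_mul]
  refine sum_nbij' (swap a b) (swap a b) hmaps hmaps (fun i _ ↦ swap_apply_self a b i)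
    (fun i _ ↦ swap_apply_self a b i) fun i _ ↦ ?_
  rw [MonoidAlgebra.single_mul_single, MonoidAlgebra.single_mul_single, one_mul]
  congr 1
  conv_rhs => rw [← hk, swap_apply_apply, inv_mul_cancel_right]

theorem commute_jucysMurphy (j k : α) : Commute (jucysMurphy R j) (jucysMurphy R k) := by
  wlog hjk : j < k generalizing j k
  · rcases (not_lt.mp hjk).eq_or_lt with rfl | hkj
    · exact Commute.refl _
    · exact (this k j hkj).symm
  exact Commute.sum_left _ _ _ fun i hi ↦
    commute_single_swap_jucysMurphy ((mem_Iio.mp hi).trans hjk) hjk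

theorem prod_map_jucysMurphy_reverse (js : List α) :
    (js.reverse.map (jucysMurphy R)).prod = (js.map (jucysMurphy R)).prod := by
  have hcomm : (js.map (jucysMurphy R)).Pairwise Commute :=
    List.pairwise_map.mpr (List.pairwise_of_forall commute_jucysMurphy)
  rw [List.map_reverse]
  exact (js.map (jucysMurphy R)).reverse_perm.prod_eq'
    (List.pairwise_reverse.mpr (hcomm.imp .symm))

end JucysMurphy

section Walks

variable {d : ℕ}

def WalkWithTops (js : List (Fin d)) (π : Perm (Fin d)) : Type :=
  {l : List (Fin d × Fin d) //
    l.map Prod.snd = js ∧ (∀ p ∈ l, p.1 < p.2) ∧ (l.map toSwap).prod = π}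

instance (js : List (Fin d)) (π : Perm (Fin d)) : Finite (WalkWithTops js π) :=
  Finite.of_injective (β := List.Vector (Fin d × Fin d) js.length)
    (fun l ↦ ⟨l.1, by simpa using congrArg List.length l.2.1⟩)
    (fun _ _ h ↦ Subtype.ext (congrArg List.Vector.toList h))

theorem card_walkWithTops_nil (π : Perm (Fin d)) :
    Nat.card (WalkWithTops [] π) = if π = 1 then 1 else 0 := by
  have hnil : ∀ l : WalkWithTops [] π, l.1 = [] := fun l ↦ List.map_eq_nil_iff.mp l.2.1
  split_ifs with h
  · subst h
    exact Nat.card_eq_one_iff_unique.mpr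
      ⟨⟨fun l l' ↦ Subtype.ext ((hnil l).trans (hnil l').symm)⟩, ⟨⟨[], rfl, by simp, rfl⟩⟩⟩
  · have : IsEmpty (WalkWithTops [] π) := ⟨fun l ↦ h (by simpa [hnil l] using l.2.2.2.symm)⟩
    exact Nat.card_of_isEmpty

def walkWithTopsConsEquiv (j : Fin d) (js : List (Fin d)) (π : Perm (Fin d)) :
    WalkWithTops (j :: js) π ≃ Σ i : Iio j, WalkWithTops js ((swap (i : Fin d) j)⁻¹ * π) where
  toFun
    | ⟨[], h⟩ => absurd h.1 (by simp)
    | ⟨p :: l, hmap, hlt, hprod⟩ =>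
      have hp : p.2 = j ∧ l.map Prod.snd = js := List.cons_eq_cons.mp hmap
      ⟨⟨p.1, mem_Iio.mpr (hp.1 ▸ hlt p List.mem_cons_self)⟩,
        ⟨l, hp.2, fun q hq ↦ hlt q (List.mem_cons_of_mem p hq),
          eq_inv_mul_iff_mul_eq.mpr (by rcases hp with ⟨rfl, -⟩; exact hprod)⟩⟩
  invFun
    | ⟨i, l, hmap, hlt, hprod⟩ =>
      ⟨(i.1, j) :: l, by rw [List.map_cons, hmap],
        List.forall_mem_cons.mpr ⟨mem_Iio.mp i.2, hlt⟩,
        show swap _ _ * (l.map toSwap).prod = π by rw [hprod, mul_inv_cancel_left]⟩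
  left_inv := by
    rintro ⟨_ | ⟨⟨i, j'⟩, l⟩, hmap, hlt, hprod⟩
    · simp at hmap
    · obtain ⟨rfl, -⟩ := List.cons_eq_cons.mp hmap
      rfl
  right_inv := by
    rintro ⟨i, l, hmap, hlt, hprod⟩
    rfl

theorem coeff_prod_map_jucysMurphy (R : Type*) [Semiring R] (js : List (Fin d))
    (π : Perm (Fin d)) :
    ((js.map (jucysMurphy R)).prod).coeff π = Nat.card (WalkWithTops js π) := by
  induction js generalizing π with
  | nil =>
    rw [card_walkWithTops_nil, List.map_nil, List.prod_nil, MonoidAlgebra.one_def,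
      MonoidAlgebra.coeff_single, Finsupp.single_apply]
    simp [eq_comm]
  | cons j js ih =>
    rw [Nat.card_congr (walkWithTopsConsEquiv j js π), Nat.card_sigma, Nat.cast_sum,
      sum_coe_sort (Iio j) fun i ↦ (Nat.card (WalkWithTops js ((swap i j)⁻¹ * π)) : R),
      List.map_cons, List.prod_cons, jucysMurphy, sum_mul, MonoidAlgebra.coeff_sum,
      Finsupp.finsetSum_apply]
    refine sum_congr rfl fun i _ ↦ ?_
    rw [MonoidAlgebra.coeff_single_mul_apply, one_mul, ih]

theorem card_walkWithTops_reverse (js : List (Fin d)) (π : Perm (Fin d)) :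
    Nat.card (WalkWithTops js.reverse π) = Nat.card (WalkWithTops js π) := by
  simpa only [coeff_prod_map_jucysMurphy, Nat.cast_id] using
    congrArg (MonoidAlgebra.coeff · π) (prod_map_jucysMurphy_reverse (R := ℕ) js)

end Walks

def walkSigmaEquiv {d : ℕ} (r : ℕ) (R : Fin d → Fin d → Prop) (ρ σ : Perm (Fin d)) :
    {l : List (Fin d × Fin d) // l.length = r ∧ (∀ p ∈ l, p.1 < p.2) ∧
      (l.map Prod.snd).Pairwise R ∧ ρ * (l.map toSwap).prod = σ} ≃
      Σ js : {js : List (Fin d) // js.length = r ∧ js.Pairwise R}, WalkWithTops js.1 (ρ⁻¹ * σ) where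
  toFun l := ⟨⟨l.1.map Prod.snd, by rw [List.length_map, l.2.1], l.2.2.2.1⟩,
    ⟨l.1, rfl, l.2.2.1, eq_inv_mul_iff_mul_eq.mpr l.2.2.2.2⟩⟩
  invFun x := ⟨x.2.1, (List.length_map _).symm.trans ((congrArg _ x.2.2.1).trans x.1.2.1),
    x.2.2.2.1, (congrArg (List.Pairwise R) x.2.2.1).mpr x.1.2.2,
    by rw [x.2.2.2.2, mul_inv_cancel_left]⟩
  left_inv _ := rfl
  right_inv := by
    rintro ⟨⟨js, hlen, hR⟩, ⟨l, hmap, hlt, hprod⟩⟩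
    obtain rfl : l.map Prod.snd = js := hmap
    rfl

theorem Wle_eq_Wge_general (d r : ℕ) (ρ σ : Equiv.Perm (Fin d)) :
    Wle d r ρ σ = Wge d r ρ σ := by
  let reverseEquiv : {js : List (Fin d) // js.length = r ∧ js.Pairwise (· ≤ ·)} ≃
      {js : List (Fin d) // js.length = r ∧ js.Pairwise (· ≥ ·)} :=
    (List.reverse_involutive.toPerm _).subtypeEquiv fun js ↦ by
      simp [List.pairwise_reverse]
  have hfiber (js) : Nonempty (WalkWithTops js.1 (ρ⁻¹ * σ) ≃
      WalkWithTops (reverseEquiv js).1 (ρ⁻¹ * σ)) :=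
    Finite.card_eq.mp (card_walkWithTops_reverse js.1 _).symm
  exact Nat.card_congr <| (walkSigmaEquiv r _ ρ σ).trans <|
    (Equiv.sigmaCongr reverseEquiv fun js ↦ (hfiber js).some).trans (walkSigmaEquiv r _ ρ σ).symm

/-- The number of weakly increasing `r`-step walks `ρ → σ` in the
Hurwitz–Cayley graph equals the number of weakly decreasing `r`-step walks `ρ → σ`. -/
theorem Wle_eq_Wge (d r : ℕ) (hd : 1 ≤ d) (ρ σ : Equiv.Perm (Fin d)) :
    Wle d r ρ σ = Wge d r ρ σ :=
  Wle_eq_Wge_general d r ρ σ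
end
end

section
/- Let d ≥ 1 and let ρ, σ ∈ S_d, and let α = (α_1, …, α_k) be the cycle type of ρ⁻¹σ (parts including fixed points, k = ℓ(ρ⁻¹σ)). Then the number of weakly monotone geodesics from ρ to σ in the Hurwitz–Cayley graph, i.e., the number of weakly monotone factorizations of ρ⁻¹σ into the minimal number d − k of transpositions, equals the product over i = 1,…,k of the Catalan numbers Cat_{α_i − 1}, where Cat_n = (1/(n+1))·binomial(2n, n). -/
/-!
Reading a weakly increasing factorization of `ρ⁻¹σ` backwards gives a weakly decreasing
factorization of `π = σ⁻¹ρ`, which has the same cycle type. Multiplying by a transposition `(a b)`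
changes the number of cycles by one: it splits the cycle through `a` and `b` if there is one and
merges two cycles otherwise. So in a factorization of `π` into `d - ℓ(π)` transpositions every
factor splits a cycle, and the first factor of a weakly decreasing one must be `(a M)`, where `M` is
the largest point moved by `π` and `a = π^j M` (`0 < j < n`) is another point of its cycle, of
length `n`; removing it leaves cycles of lengths `n - j` and `j`. Hence the count `W(π)` satisfies
`W(π) = ∑_a W((a M)·π)`, and the Catalan recursion `Cat_{n-1} = ∑_{j=1}^{n-1} Cat_{n-j-1} Cat_{j-1}`
turns this into `W(π) = ∏ Cat_{αᵢ-1}` by induction on `d - ℓ(π)`.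
-/

noncomputable section

/-- The cycle type of a permutation of `{1,…,d}` including parts equal to `1` for fixed points. -/
def fullCycleType {d : ℕ} (π : Equiv.Perm (Fin d)) : Multiset ℕ :=
  π.cycleType + Multiset.replicate (d - π.support.card) 1

open Equiv Finset

namespace List

theorem prod_reverse_of_forall_inv_eq {G : Type*} [Group G] {l : List G}
    (h : ∀ g ∈ l, g⁻¹ = g) : l.reverse.prod = l.prod⁻¹ := by
  rw [prod_reverse_noncomm, map_congr_left h, map_id']

variable {α : Type*} [DecidableEq α]

theorem formPerm_cons_append_cons {x y : α} {l₁ : List α} (l₂ : List α) (hy : y ∉ x :: l₁) :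
    formPerm (x :: l₁ ++ y :: l₂) = Equiv.swap x y * formPerm (x :: l₁) * formPerm (y :: l₂) := by
  induction l₁ generalizing x with
  | nil => simp
  | cons x' l₁ ih =>
    have hyx : y ≠ x := fun h => hy (h ▸ mem_cons_self)
    have hyx' : y ≠ x' := fun h => hy (h ▸ mem_cons_of_mem _ mem_cons_self)
    have hswap : Equiv.swap x x' * Equiv.swap x' y = Equiv.swap x y * Equiv.swap x x' := by
      rw [mul_swap_eq_swap_mul, swap_apply_right, swap_apply_of_ne_of_ne hyx hyx']
    rw [cons_append, cons_append, formPerm_cons_cons, ← cons_append,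
      ih (fun h => hy (mem_cons_of_mem _ h)), formPerm_cons_cons]
    simp only [← mul_assoc, hswap]

theorem cycleType_formPerm_of_nodup [Fintype α] {l : List α} (hl : l.Nodup) :
    l.formPerm.cycleType = ({l.length} : Multiset ℕ).filter (2 ≤ ·) := by
  rcases lt_or_ge l.length 2 with h | h
  · rw [formPerm_eq_one_iff _ hl |>.2 (by omega), Equiv.Perm.cycleType_one,
      Multiset.filter_singleton, if_neg (by omega)]
    rfl
  · rw [(isCycle_formPerm hl h).cycleType, support_formPerm_of_nodup _ hl, card_toFinset,
      dedup_eq_self.2 hl, Multiset.filter_singleton, if_pos h]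
    rintro x rfl
    simp at h

theorem cycleType_swap_mul_formPerm {x y : α} [Fintype α] {l₁ l₂ : List α}
    (hl : (x :: l₁ ++ y :: l₂).Nodup) :
    (Equiv.swap x y * formPerm (x :: l₁ ++ y :: l₂)).cycleType =
      ({(x :: l₁).length, (y :: l₂).length} : Multiset ℕ).filter (2 ≤ ·) := by
  obtain ⟨hl₁, hl₂, hdisj⟩ := nodup_append.1 hl
  have hy : y ∉ x :: l₁ := fun h => hdisj y h y mem_cons_self rfl
  have hdisj' : (formPerm (x :: l₁)).Disjoint (formPerm (y :: l₂)) := fun z =>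
    if hz : z ∈ x :: l₁ then
      .inr (formPerm_apply_of_notMem fun hz' => hdisj z hz z hz' rfl)
    else .inl (formPerm_apply_of_notMem hz)
  rw [formPerm_cons_append_cons _ hy, mul_assoc, swap_mul_self_mul, hdisj'.cycleType_mul,
    cycleType_formPerm_of_nodup hl₁, cycleType_formPerm_of_nodup hl₂, ← Multiset.filter_add]
  rfl

end List

namespace Multiset

@[to_additive]
theorem prod_map_filter_of_ne {β M : Type*} [CommMonoid M] (p : β → Prop) [DecidablePred p]
    {m : Multiset β} {f : β → M} (hf : ∀ x ∈ m, f x ≠ 1 → p x) :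
    ((m.filter p).map f).prod = (m.map f).prod := by
  conv_rhs => rw [← filter_add_not p m]
  have hnot : ((m.filter (¬p ·)).map f).prod = 1 := prod_eq_one fun y hy => by
    obtain ⟨x, hx, rfl⟩ := mem_map.1 hy
    rw [mem_filter] at hx
    exact not_not.1 fun hfx => hx.2 (hf x hx.1 hfx)
  rw [map_add, prod_add, hnot, mul_one]

end Multiset

theorem catalan_pos (n : ℕ) : 0 < catalan n :=
  Nat.pos_of_mul_pos_left ((succ_mul_catalan_eq_centralBinom n).symm ▸ n.centralBinom_pos)

theorem sum_Ico_catalan_mul_catalan {n : ℕ} (hn : 2 ≤ n) :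
    ∑ j ∈ Ico 1 n, catalan (n - j - 1) * catalan (j - 1) = catalan (n - 1) := by
  obtain ⟨m, rfl⟩ : ∃ m, n = m + 2 := ⟨n - 2, by omega⟩
  rw [show m + 2 - 1 = m + 1 by omega, catalan_succ',
    Finset.Nat.sum_antidiagonal_eq_sum_range_succ (fun i j => catalan i * catalan j),
    sum_Ico_eq_sum_range, show m + 2 - 1 = m + 1 by omega]
  refine sum_congr rfl fun i hi => ?_
  rw [mem_range] at hi
  rw [mul_comm, show 1 + i - 1 = i by omega, show m + 2 - (1 + i) - 1 = m - i by omega]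

namespace Equiv.Perm

section DecidableEq
variable {α : Type*} [DecidableEq α]

theorem prod_map_swap_apply_of_forall_ne {l : List (α × α)} {x : α}
    (h : ∀ p ∈ l, p.1 ≠ x ∧ p.2 ≠ x) : (l.map (Function.uncurry swap)).prod x = x := by
  induction l with
  | nil => rfl
  | cons p l ih =>
    rw [List.map_cons, List.prod_cons, mul_apply, ih fun q hq => h q (List.mem_cons_of_mem _ hq)]
    exact swap_apply_of_ne_of_ne (h p List.mem_cons_self).1.symm (h p List.mem_cons_self).2.symm

theorem prod_map_swap_reverse (l : List (α × α)) :
    (l.map (Function.uncurry swap)).reverse.prod = (l.map (Function.uncurry swap)).prod⁻¹ :=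
  List.prod_reverse_of_forall_inv_eq fun g hg => by
    obtain ⟨p, -, rfl⟩ := List.mem_map.1 hg
    exact swap_inv p.1 p.2

theorem sameCycle_swap_mul_of_not_sameCycle [Finite α] {π : Perm α} {a b : α}
    (h : ¬π.SameCycle a b) : (swap a b * π).SameCycle a b := by
  -- `swap a b * π` follows `π` along the `π`-orbit of `b` up to `π⁻¹ b`, which it sends to `a`.
  set τ := swap a b * π
  have hτ : ∀ i : ℕ, τ.SameCycle b ((π ^ i) b) := by
    intro i
    induction i with
    | zero => exact SameCycle.refl _ _
    | succ i ih =>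
      rw [pow_succ', mul_apply]
      by_cases hi : (π ^ i) b = π⁻¹ b
      · rw [hi, ← mul_apply, mul_inv_cancel, one_apply]
      · have hb : π ((π ^ i) b) ≠ b := fun e => hi (eq_inv_iff_eq.2 e)
        have ha : π ((π ^ i) b) ≠ a := fun e =>
          h (e ▸ (sameCycle_apply_right.2 (sameCycle_pow_right.2 (SameCycle.refl _ _))).symm)
        have : τ ((π ^ i) b) = π ((π ^ i) b) := swap_apply_of_ne_of_ne ha hb
        exact this ▸ sameCycle_apply_right.2 ih
  obtain ⟨i, hi⟩ := (sameCycle_apply_right.1 (by simpa using SameCycle.refl π b) :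
    π.SameCycle b (π⁻¹ b)).exists_nat_pow_eq
  have hτb : τ (π⁻¹ b) = a := by simp [τ]
  exact (hτb ▸ sameCycle_apply_right.2 (hi ▸ hτ i)).symm

end DecidableEq

section Fintype
variable {α : Type*} [DecidableEq α] [Fintype α]

theorem support_swap_mul_subset {π : Perm α} {a b : α} (ha : a ∈ π.support)
    (hb : b ∈ π.support) : (swap a b * π).support ⊆ π.support := fun x hx => by
  by_contra hxπ
  have hxa : x ≠ a := fun h => hxπ (h ▸ ha)
  have hxb : x ≠ b := fun h => hxπ (h ▸ hb)
  exact mem_support.1 hx (by rw [mul_apply, notMem_support.1 hxπ, swap_apply_of_ne_of_ne hxa hxb])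

theorem SameCycle.mem_support_right {π : Perm α} {a b : α} (h : π.SameCycle a b) (hab : a ≠ b) :
    b ∈ π.support :=
  mem_support.2 fun hb => hab (h.symm.eq_of_left hb).symm

theorem SameCycle.exists_pos_pow_eq {π : Perm α} {a b : α} (h : π.SameCycle a b) (hab : a ≠ b) :
    ∃ k, 0 < k ∧ k < #(π.cycleOf a).support ∧ (π ^ k) a = b := by
  have ha : a ∈ π.support := mem_support.2 fun ha => hab (h.eq_of_left ha)
  obtain ⟨k, hkn, hk⟩ := h.exists_pow_eq_of_mem_support ha
  exact ⟨k, Nat.pos_of_ne_zero fun hk0 => hab (by simpa [hk0] using hk), hkn, hk⟩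

theorem sum_support_cycleOf_erase {β : Type*} [AddCommMonoid β] (f : α → β) {π : Perm α} {x : α}
    (hx : x ∈ π.support) :
    ∑ y ∈ (π.cycleOf x).support.erase x, f y =
      ∑ j ∈ Ico 1 #(π.cycleOf x).support, f ((π ^ j) x) := by
  have hcyc := isCycleOn_support_cycleOf π x
  have hxc : x ∈ (π.cycleOf x).support := mem_support_cycleOf_iff.2 ⟨SameCycle.refl _ _, hx⟩
  have hinj : ∀ i < #(π.cycleOf x).support, ∀ j < #(π.cycleOf x).support,
      (π ^ i) x = (π ^ j) x → i = j := fun i hi j hj hij =>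
    ((hcyc.pow_apply_eq_pow_apply hxc).1 hij).eq_of_lt_of_lt hi hj
  rw [← sum_image fun i hi j hj => hinj i (mem_Ico.1 hi).2 j (mem_Ico.1 hj).2]
  congr 1
  ext y
  simp only [mem_erase, mem_image, mem_Ico]
  constructor
  · rintro ⟨hyx, hy⟩
    obtain ⟨j, hj, rfl⟩ := (mem_support_cycleOf_iff.1 hy).1.exists_pow_eq_of_mem_support hx
    exact ⟨j, ⟨Nat.pos_of_ne_zero fun h => hyx (by simp [h]), hj⟩, rfl⟩
  · rintro ⟨j, ⟨hj0, hj⟩, rfl⟩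
    refine ⟨fun h => ?_, mem_support_cycleOf_iff.2 ⟨sameCycle_pow_right.2 (SameCycle.refl _ _), hx⟩⟩
    have := hinj j hj 0 (by omega) (by simpa using h)
    omega

theorem cycleType_swap_mul_cycleOf {π : Perm α} {a b : α} {k : ℕ} (hk : 0 < k)
    (hkn : k < #(π.cycleOf a).support) (hb : (π ^ k) a = b) :
    (swap a b * π.cycleOf a).cycleType =
      ({k, #(π.cycleOf a).support - k} : Multiset ℕ).filter (2 ≤ ·) := by
  obtain ⟨k, rfl⟩ : ∃ k', k = k' + 1 := ⟨k - 1, by omega⟩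
  have hlen : (π.toList a).length = #(π.cycleOf a).support := length_toList π a
  obtain ⟨x, L, hL⟩ := List.exists_cons_of_ne_nil
    (List.ne_nil_of_length_pos (l := π.toList a) (by omega))
  have hx : x = a := by
    simpa [hL] using getElem_toList π a 0 (by omega)
  have htake : (π.toList a).take (k + 1) = a :: L.take k := by
    simp [hL, hx]
  have hdrop : (π.toList a).drop (k + 1) = b :: (π.toList a).drop (k + 2) := by
    rw [List.drop_eq_getElem_cons (by omega), getElem_toList, hb]
  have hsplit : π.toList a = a :: L.take k ++ b :: (π.toList a).drop (k + 2) := by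
    rw [← htake, ← hdrop, List.take_append_drop]
  have hnodup := nodup_toList π a
  rw [hsplit] at hnodup
  have := List.cycleType_swap_mul_formPerm hnodup
  rw [← hsplit, formPerm_toList] at this
  rw [this]
  congr 3
  · rw [← htake, List.length_take]; omega
  · rw [← hdrop, List.length_drop]; omega

theorem cycleType_swap_mul_add {π : Perm α} {a b : α} {k : ℕ} (hk : 0 < k)
    (hkn : k < #(π.cycleOf a).support) (hb : (π ^ k) a = b) :
    (swap a b * π).cycleType + {#(π.cycleOf a).support} =
      π.cycleType + ({k, #(π.cycleOf a).support - k} : Multiset ℕ).filter (2 ≤ ·) := by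
  have ha : π a ≠ a := two_le_card_support_cycleOf_iff.1 (by omega)
  set c := π.cycleOf a
  have hdisj : (π * c⁻¹).Disjoint c :=
    disjoint_mul_inv_of_mem_cycleFactorsFinset <|
      cycleOf_mem_cycleFactorsFinset_iff.2 (mem_support.2 ha)
  have hac : a ∈ c.support := mem_support_cycleOf_iff.2 ⟨SameCycle.refl _ _, mem_support.2 ha⟩
  have hbc : b ∈ c.support :=
    mem_support_cycleOf_iff.2 ⟨hb ▸ sameCycle_pow_right.2 (SameCycle.refl _ _), mem_support.2 ha⟩
  have hdisj' : (π * c⁻¹).Disjoint (swap a b * c) :=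
    hdisj.mono le_rfl (support_swap_mul_subset hac hbc)
  have hπ : π = c * (π * c⁻¹) := by rw [← hdisj.commute.eq, inv_mul_cancel_right]
  have h1 : (swap a b * π).cycleType = (swap a b * c).cycleType + (π * c⁻¹).cycleType := by
    rw [show swap a b * π = swap a b * c * (π * c⁻¹) by rw [mul_assoc, ← hπ],
      hdisj'.symm.cycleType_mul]
  have h2 : π.cycleType = c.cycleType + (π * c⁻¹).cycleType := by
    conv_lhs => rw [hπ]
    exact hdisj.symm.cycleType_mul
  rw [h1, h2, cycleType_swap_mul_cycleOf hk hkn hb, (isCycle_cycleOf π ha).cycleType]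
  abel

def transpositionLength (π : Perm α) : ℕ :=
  (π.cycleType.map (· - 1)).sum

def catalanWeight (π : Perm α) : ℕ :=
  (π.cycleType.map fun n => catalan (n - 1)).prod

@[simp]
theorem transpositionLength_inv (π : Perm α) : π⁻¹.transpositionLength = π.transpositionLength := by
  simp [transpositionLength]

@[simp]
theorem catalanWeight_inv (π : Perm α) : π⁻¹.catalanWeight = π.catalanWeight := by
  simp [catalanWeight]

theorem transpositionLength_add_card_cycleType (π : Perm α) :
    π.transpositionLength + Multiset.card π.cycleType = #π.support := by
  calc π.transpositionLength + Multiset.card π.cycleType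
      = (π.cycleType.map fun n => n - 1 + 1).sum := by
        simp [transpositionLength, Multiset.sum_map_add]
    _ = #π.support := by
        rw [Multiset.map_congr rfl fun n hn => Nat.sub_add_cancel
          (one_le_two.trans (two_le_of_mem_cycleType hn)), Multiset.map_id', sum_cycleType]

theorem transpositionLength_eq_zero_iff {π : Perm α} : π.transpositionLength = 0 ↔ π = 1 := by
  refine ⟨fun h => cycleType_eq_zero.1 (Multiset.eq_zero_of_forall_notMem fun n hn => ?_),
    fun h => by simp [h, transpositionLength]⟩
  have h2 := two_le_of_mem_cycleType hn
  have := Multiset.sum_eq_zero_iff.1 h (n - 1) (Multiset.mem_map_of_mem _ hn)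
  omega

theorem transpositionLength_swap_mul_of_sameCycle {π : Perm α} {a b : α} (h : π.SameCycle a b)
    (hab : a ≠ b) : (swap a b * π).transpositionLength + 1 = π.transpositionLength := by
  obtain ⟨k, hk, hkn, hb⟩ := h.exists_pos_pow_eq hab
  have := congrArg (fun m => (m.map (· - 1)).sum) (cycleType_swap_mul_add hk hkn hb)
  simp only [Multiset.map_add, Multiset.sum_add, Multiset.sum_map_filter_of_ne _
    (fun x _ (hx : x - 1 ≠ 0) => show 2 ≤ x by omega), Multiset.map_singleton,
    Multiset.sum_singleton, Multiset.insert_eq_cons, Multiset.map_cons, Multiset.sum_cons] at this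
  unfold transpositionLength
  omega

theorem transpositionLength_swap_mul_of_not_sameCycle {π : Perm α} {a b : α}
    (h : ¬π.SameCycle a b) : (swap a b * π).transpositionLength = π.transpositionLength + 1 := by
  have hab : a ≠ b := fun hab => h (hab ▸ SameCycle.refl _ _)
  have := transpositionLength_swap_mul_of_sameCycle (sameCycle_swap_mul_of_not_sameCycle h) hab
  rw [swap_mul_self_mul] at this
  omega

theorem transpositionLength_swap_mul_le (π : Perm α) (a b : α) :
    (swap a b * π).transpositionLength ≤ π.transpositionLength + 1 := by
  by_cases hab : a = b
  · subst hab
    rw [swap_self, ← Perm.one_def, one_mul]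
    omega
  by_cases h : π.SameCycle a b
  · have := transpositionLength_swap_mul_of_sameCycle h hab
    omega
  · exact (transpositionLength_swap_mul_of_not_sameCycle h).le

theorem transpositionLength_prod_le (l : List (α × α)) :
    (l.map (Function.uncurry swap)).prod.transpositionLength ≤ l.length := by
  induction l with
  | nil => simp [transpositionLength]
  | cons p l ih =>
    rw [List.map_cons, List.prod_cons, List.length_cons]
    exact (transpositionLength_swap_mul_le _ p.1 p.2).trans (by omega)

theorem sameCycle_of_length_eq_transpositionLength {π : Perm α} {p : α × α} {t : List (α × α)}
    (hprod : ((p :: t).map (Function.uncurry swap)).prod = π)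
    (hlen : t.length + 1 = π.transpositionLength) : π.SameCycle p.1 p.2 := by
  by_contra h
  have ht : (t.map (Function.uncurry swap)).prod = swap p.1 p.2 * π := by
    rw [← hprod, List.map_cons, List.prod_cons, Function.uncurry, swap_mul_self_mul]
  have := transpositionLength_prod_le t
  rw [ht, transpositionLength_swap_mul_of_not_sameCycle h] at this
  omega

theorem catalanWeight_swap_mul {π : Perm α} {a b : α} {k : ℕ} (hk : 0 < k)
    (hkn : k < #(π.cycleOf a).support) (hb : (π ^ k) a = b) :
    (swap a b * π).catalanWeight * catalan (#(π.cycleOf a).support - 1) =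
      π.catalanWeight * (catalan (k - 1) * catalan (#(π.cycleOf a).support - k - 1)) := by
  have := congrArg (fun m => (m.map fun n => catalan (n - 1)).prod)
    (cycleType_swap_mul_add hk hkn hb)
  simpa [catalanWeight, Multiset.prod_map_filter_of_ne _
    (fun x _ (hx : catalan (x - 1) ≠ 1) => show 2 ≤ x by
      by_contra h; exact hx (by rw [show x - 1 = 0 by omega, catalan_zero]))] using this

theorem catalanWeight_swap_pow_apply_mul {π : Perm α} {x : α} (hx : x ∈ π.support) {j : ℕ}
    (hj : 0 < j) (hjn : j < #(π.cycleOf x).support) :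
    (swap ((π ^ j) x) x * π).catalanWeight * catalan (#(π.cycleOf x).support - 1) =
      π.catalanWeight * (catalan (#(π.cycleOf x).support - j - 1) * catalan (j - 1)) := by
  have hcyc : π.cycleOf ((π ^ j) x) = π.cycleOf x :=
    (sameCycle_pow_right.2 (SameCycle.refl π x)).cycleOf_eq.symm
  have hxc : x ∈ (π.cycleOf x).support := mem_support_cycleOf_iff.2 ⟨SameCycle.refl _ _, hx⟩
  have hback : (π ^ (#(π.cycleOf x).support - j)) ((π ^ j) x) = x := by
    rw [← mul_apply, ← pow_add, Nat.sub_add_cancel hjn.le,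
      (isCycleOn_support_cycleOf π x).pow_card_apply hxc]
  have := catalanWeight_swap_mul (by omega) (by rw [hcyc]; omega) hback
  rwa [hcyc, Nat.sub_sub_self hjn.le] at this

end Fintype

section LinearOrder
variable {α : Type*} [LinearOrder α]

def antitoneFactorizations (r : ℕ) (π : Perm α) : Set (List (α × α)) :=
  {l | l.length = r ∧ (∀ p ∈ l, p.1 < p.2) ∧ (l.map Prod.snd).Pairwise (· ≥ ·) ∧
    (l.map (Function.uncurry swap)).prod = π}

theorem reverse_mem_antitoneFactorizations_iff {r : ℕ} {π : Perm α} {l : List (α × α)} :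
    l.reverse ∈ antitoneFactorizations r π ↔ l.length = r ∧ (∀ p ∈ l, p.1 < p.2) ∧
      (l.map Prod.snd).Pairwise (· ≤ ·) ∧ (l.map (Function.uncurry swap)).prod = π⁻¹ := by
  simp only [antitoneFactorizations, Set.mem_ofPred_eq, List.length_reverse, List.mem_reverse,
    List.map_reverse, List.pairwise_reverse, ge_iff_le, prod_map_swap_reverse, inv_eq_iff_eq_inv]

variable [Fintype α]

instance (r : ℕ) (π : Perm α) : Finite (antitoneFactorizations r π) :=
  ((List.finite_length_eq _ r).subset fun _ hl => hl.1).to_subtype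

theorem snd_le_of_mem_antitoneFactorizations {π : Perm α} {t : List (α × α)} {M : α}
    (ht : t ∈ antitoneFactorizations π.transpositionLength π) (hM : ∀ x ∈ π.support, x ≤ M) :
    ∀ q ∈ t, q.2 ≤ M := by
  obtain ⟨hlen, hlt, hsort, hprod⟩ := ht
  cases t with
  | nil => simp
  | cons p t =>
    have hp : p.2 ≤ M := hM _ <| (sameCycle_of_length_eq_transpositionLength hprod hlen)
      |>.mem_support_right (hlt p List.mem_cons_self).ne
    rintro q (_ | ⟨_, hq⟩)
    · exact hp
    · exact le_trans ((List.pairwise_cons.1 hsort).1 _ (List.mem_map_of_mem hq)) hp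

theorem cons_mem_antitoneFactorizations_iff {π : Perm α} {M : α}
    (hM : IsGreatest (π.support : Set α) M) {r : ℕ} (hr : r + 1 = π.transpositionLength)
    {a b : α} {t : List (α × α)} :
    (a, b) :: t ∈ antitoneFactorizations (r + 1) π ↔
      b = M ∧ a ∈ (π.cycleOf M).support.erase M ∧
        t ∈ antitoneFactorizations r (swap a M * π) := by
  constructor
  · rintro ⟨hlen, hlt, hsort, hprod⟩
    have hab : a < b := hlt _ List.mem_cons_self
    have hsc := sameCycle_of_length_eq_transpositionLength hprod (by simpa [hr] using hlen)
    have hbM : b = M := by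
      refine le_antisymm (hM.2 (hsc.mem_support_right hab.ne)) (not_lt.1 fun hbM => ?_)
      refine mem_support.1 hM.1 (hprod ▸ prod_map_swap_apply_of_forall_ne fun q hq => ?_)
      have hq2 : q.2 ≤ b := by
        rcases List.mem_cons.1 hq with rfl | hq
        · exact le_rfl
        · exact (List.pairwise_cons.1 hsort).1 _ (List.mem_map_of_mem hq)
      exact ⟨((hlt q hq).trans_le hq2 |>.trans hbM).ne, (hq2.trans_lt hbM).ne⟩
    subst hbM
    refine ⟨rfl, mem_erase.2 ⟨hab.ne, mem_support_cycleOf_iff.2 ⟨hsc.symm, hM.1⟩⟩,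
      by simpa using hlen, fun q hq => hlt q (List.mem_cons_of_mem _ hq),
      (List.pairwise_cons.1 hsort).2, ?_⟩
    rw [← hprod, List.map_cons, List.prod_cons, Function.uncurry, swap_mul_self_mul]
  · rintro ⟨rfl, ha, hlen, hlt, hsort, hprod⟩
    obtain ⟨haM, hmem⟩ := mem_erase.1 ha
    have hsc : π.SameCycle a b := (mem_support_cycleOf_iff.1 hmem).1.symm
    have haπ : a ∈ π.support := hsc.symm.mem_support_right haM.symm
    have htl := transpositionLength_swap_mul_of_sameCycle hsc haM
    have hsnd := snd_le_of_mem_antitoneFactorizations (π := swap a b * π)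
      ⟨by omega, hlt, hsort, hprod⟩ fun x hx => hM.2 (support_swap_mul_subset haπ hM.1 hx)
    refine ⟨by simpa using hlen, ?_, ?_, ?_⟩
    · rintro q (_ | ⟨_, hq⟩)
      · exact lt_of_le_of_ne (hM.2 haπ) haM
      · exact hlt q hq
    · exact List.pairwise_cons.2 ⟨fun x hx => by
        obtain ⟨q, hq, rfl⟩ := List.mem_map.1 hx
        exact hsnd q hq, hsort⟩
    · rw [List.map_cons, List.prod_cons, hprod, Function.uncurry, swap_mul_self_mul]

theorem ncard_antitoneFactorizations_succ {π : Perm α} {M : α}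
    (hM : IsGreatest (π.support : Set α) M) {r : ℕ} (hr : r + 1 = π.transpositionLength) :
    (antitoneFactorizations (r + 1) π).ncard =
      ∑ a ∈ (π.cycleOf M).support.erase M, (antitoneFactorizations r (swap a M * π)).ncard := by
  let e : (Σ a : (π.cycleOf M).support.erase M, antitoneFactorizations r (swap a.1 M * π)) →
      antitoneFactorizations (r + 1) π := fun x =>
    ⟨(x.1.1, M) :: x.2.1, (cons_mem_antitoneFactorizations_iff hM hr).2 ⟨rfl, x.1.2, x.2.2⟩⟩
  have he : Function.Bijective e := by
    refine ⟨fun ⟨⟨a, ha⟩, ⟨t, ht⟩⟩ ⟨⟨a', ha'⟩, ⟨t', ht'⟩⟩ h => ?_, fun ⟨l, hl⟩ => ?_⟩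
    · obtain ⟨⟨rfl, -⟩, rfl⟩ := List.cons.inj (Subtype.ext_iff.1 h)
      rfl
    · obtain ⟨⟨a, b⟩, t, rfl⟩ := List.exists_cons_of_length_eq_add_one hl.1
      obtain ⟨rfl, ha, ht⟩ := (cons_mem_antitoneFactorizations_iff hM hr).1 hl
      exact ⟨⟨⟨a, ha⟩, ⟨t, ht⟩⟩, rfl⟩
  rw [← Nat.card_coe_set_eq, ← Nat.card_congr (Equiv.ofBijective e he), Nat.card_sigma]
  simp only [Nat.card_coe_set_eq]
  exact sum_coe_sort _ fun a => (antitoneFactorizations r (swap a M * π)).ncard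

theorem ncard_antitoneFactorizations (π : Perm α) :
    (antitoneFactorizations π.transpositionLength π).ncard = π.catalanWeight := by
  induction h : π.transpositionLength generalizing π with
  | zero =>
    obtain rfl := transpositionLength_eq_zero_iff.1 h
    have : antitoneFactorizations 0 (1 : Perm α) = {[]} := Set.ext fun l =>
      ⟨fun hl => List.eq_nil_of_length_eq_zero hl.1, by rintro rfl; simp [antitoneFactorizations]⟩
    simp [this, catalanWeight]
  | succ r ih =>
    have hne : π.support.Nonempty := by
      refine nonempty_iff_ne_empty.2 fun h0 => ?_
      rw [support_eq_empty_iff] at h0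
      simp [h0, transpositionLength] at h
    set M := π.support.max' hne
    have hM : IsGreatest (π.support : Set α) M :=
      ⟨π.support.max'_mem hne, fun x hx => π.support.le_max' x hx⟩
    set n := #(π.cycleOf M).support
    have hn : 2 ≤ n := two_le_card_support_cycleOf_iff.2 (mem_support.1 hM.1)
    refine Nat.eq_of_mul_eq_mul_right (catalan_pos (n - 1)) ?_
    calc (antitoneFactorizations (r + 1) π).ncard * catalan (n - 1)
        = ∑ a ∈ (π.cycleOf M).support.erase M, (swap a M * π).catalanWeight * catalan (n - 1) := by
          rw [ncard_antitoneFactorizations_succ hM h.symm, sum_mul]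
          refine sum_congr rfl fun a ha => ?_
          obtain ⟨haM, hmem⟩ := mem_erase.1 ha
          have := transpositionLength_swap_mul_of_sameCycle
            (mem_support_cycleOf_iff.1 hmem).1.symm haM
          rw [← ih _ (by omega)]
      _ = ∑ j ∈ Ico 1 n, π.catalanWeight * (catalan (n - j - 1) * catalan (j - 1)) := by
          rw [sum_support_cycleOf_erase
            (fun a => (swap a M * π).catalanWeight * catalan (n - 1)) hM.1]
          exact sum_congr rfl fun j hj =>
            catalanWeight_swap_pow_apply_mul hM.1 (mem_Ico.1 hj).1 (mem_Ico.1 hj).2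
      _ = π.catalanWeight * catalan (n - 1) := by rw [← mul_sum, sum_Ico_catalan_mul_catalan hn]

end LinearOrder

end Equiv.Perm

open Equiv.Perm

theorem Wle_eq_ncard (d r : ℕ) (ρ σ : Equiv.Perm (Fin d)) :
    Wle d r ρ σ = (antitoneFactorizations r (σ⁻¹ * ρ)).ncard := by
  rw [← Nat.card_coe_set_eq]
  refine Nat.card_congr (Equiv.subtypeEquiv (List.reverse_involutive.toPerm _) fun l => ?_)
  rw [Function.Involutive.coe_toPerm, reverse_mem_antitoneFactorizations_iff, mul_inv_rev, inv_inv,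
    eq_inv_mul_iff_mul_eq]
  rfl

theorem sub_ell_eq_transpositionLength {d : ℕ} (π : Equiv.Perm (Fin d)) :
    d - ell π = π.transpositionLength := by
  have := π.transpositionLength_add_card_cycleType
  have := card_le_univ π.support
  rw [Fintype.card_fin] at this
  unfold ell
  omega

theorem prod_map_fullCycleType_catalan {d : ℕ} (π : Equiv.Perm (Fin d)) :
    ((fullCycleType π).map fun a => catalan (a - 1)).prod = π.catalanWeight := by
  simp [fullCycleType, catalanWeight, Multiset.map_replicate]

theorem Wle_geodesic_count_general (d : ℕ) (ρ σ : Equiv.Perm (Fin d)) :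
    Wle d (d - ell (ρ⁻¹ * σ)) ρ σ =
      ((fullCycleType (ρ⁻¹ * σ)).map fun a => catalan (a - 1)).prod := by
  have hinv : σ⁻¹ * ρ = (ρ⁻¹ * σ)⁻¹ := by group
  rw [sub_ell_eq_transpositionLength, Wle_eq_ncard, prod_map_fullCycleType_catalan, hinv,
    ← transpositionLength_inv, ← catalanWeight_inv, ncard_antitoneFactorizations]

/-- The number of weakly monotone geodesics `ρ → σ` in the Hurwitz–Cayley graph,
i.e. weakly monotone factorizations of `ρ⁻¹σ` into the minimal number `d - ℓ(ρ⁻¹σ)` of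
transpositions, equals `∏_i Cat_{α_i - 1}` where `α` is the cycle type (with fixed points) of
`ρ⁻¹σ` and `Cat_n` is the Catalan number. -/
theorem Wle_geodesic_count (d : ℕ) (hd : 1 ≤ d) (ρ σ : Equiv.Perm (Fin d)) :
    Wle d (d - ell (ρ⁻¹ * σ)) ρ σ =
      ((fullCycleType (ρ⁻¹ * σ)).map fun a => catalan (a - 1)).prod :=
  Wle_geodesic_count_general d ρ σ
end
end
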